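/- arXiv:2204.08243 — 7 statements merged into one kernel-verified Lean document; each statement's English description precedes it below -/
import Mathlib

section
/- Let a>0 and b,c ∈ ℝ, and let φ(τ) = τ^a (log τ)^b (log log τ)^c on (e, ∞). Suppose L ∈ (e, ∞) is such that φ is strictly increasing on (L, ∞), and let φ⁻¹ : (φ(L), ∞) → (L, ∞) denote its inverse. Then φ⁻¹(τ) ≍ τ^{1/a} (log τ)^{-b/a} (log log τ)^{-c/a} as τ → ∞, i.e. there exist C ≥ 1 and M > 0 such that C⁻¹ τ^{1/a} (log τ)^{-b/a} (log log τ)^{-c/a} ≤ φ⁻¹(τ) ≤ C τ^{1/a} (log τ)^{-b/a} (log log τ)^{-c/a} for all τ ≥ M. -/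
/-!
Write `g τ = τ^(1/a) (log τ)^(-b/a) (log log τ)^(-c/a)` and `u = K g τ`. Then
`u^a = K^a τ (log τ)^(-b) (log log τ)^(-c)`, so
`φ(u) / τ = K^a (log u / log τ)^b (log log u / log log τ)^c`.
Since `log u = (1/a) log τ + o(log τ)`, the two ratios tend to `1/a` and `1`, hence
`φ(K g τ) / τ → K^a a^(-b)`. For a suitable `K ≥ 1` this limit exceeds `1` while the one
for `K⁻¹` is below `1`; monotonicity of `φ` then traps `φ⁻¹(τ)` between `K⁻¹ g τ` and
`K g τ`.
-/

open Filter Real Topology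

noncomputable def powLogLog (a b c τ : ℝ) : ℝ := τ ^ a * log τ ^ b * log (log τ) ^ c

lemma pos_and_log_pos_and_log_log_pos {τ : ℝ} (hτ : exp 1 < τ) :
    0 < τ ∧ 0 < log τ ∧ 0 < log (log τ) := by
  have h0 : 0 < τ := (exp_pos 1).trans hτ
  have h1 : 1 < log τ := (lt_log_iff_exp_lt h0).mpr hτ
  exact ⟨h0, zero_lt_one.trans h1, log_pos h1⟩

lemma powLogLog_pos {a b c τ : ℝ} (hτ : exp 1 < τ) : 0 < powLogLog a b c τ := by
  obtain ⟨h0, h1, h2⟩ := pos_and_log_pos_and_log_log_pos hτ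
  unfold powLogLog; positivity

lemma log_powLogLog {a b c τ : ℝ} (hτ : exp 1 < τ) :
    log (powLogLog a b c τ) = a * log τ + b * log (log τ) + c * log (log (log τ)) := by
  obtain ⟨h0, h1, h2⟩ := pos_and_log_pos_and_log_log_pos hτ
  unfold powLogLog
  rw [log_mul (by positivity) (by positivity), log_mul (by positivity) (by positivity),
    log_rpow h0, log_rpow h1, log_rpow h2]

lemma powLogLog_rpow {a b c τ : ℝ} (hτ : exp 1 < τ) (s : ℝ) :
    powLogLog a b c τ ^ s = powLogLog (a * s) (b * s) (c * s) τ := by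
  obtain ⟨h0, h1, h2⟩ := pos_and_log_pos_and_log_log_pos hτ
  unfold powLogLog
  rw [mul_rpow (by positivity) (by positivity), mul_rpow (by positivity) (by positivity),
    ← rpow_mul h0.le, ← rpow_mul h1.le, ← rpow_mul h2.le]

lemma tendsto_log_const_mul_powLogLog_div_log {K : ℝ} (hK : 0 < K) (a b c : ℝ) :
    Tendsto (fun τ => log (K * powLogLog a b c τ) / log τ) atTop (𝓝 a) := by
  have hloglog : (fun τ => log (log τ)) =o[atTop] log :=
    isLittleO_log_id_atTop.comp_tendsto tendsto_log_atTop
  have hlogloglog : (fun τ => log (log (log τ))) =o[atTop] log :=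
    (isLittleO_log_id_atTop.comp_tendsto (tendsto_log_atTop.comp tendsto_log_atTop)).trans
      hloglog
  have hrem : (fun τ => log K + b * log (log τ) + c * log (log (log τ))) =o[atTop] log :=
    (isLittleO_const_log_atTop.add (hloglog.const_mul_left b)).add
      (hlogloglog.const_mul_left c)
  have hlim := hrem.tendsto_div_nhds_zero.const_add a
  rw [add_zero] at hlim
  refine hlim.congr' ?_
  filter_upwards [eventually_gt_atTop (exp 1)] with τ hτ
  rw [log_mul hK.ne' (powLogLog_pos hτ).ne', log_powLogLog hτ]
  field_simp [(pos_and_log_pos_and_log_log_pos hτ).2.1.ne']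
  ring

lemma tendsto_log_div_log_of_tendsto_div {α : Type*} {l : Filter α} {F G : α → ℝ} {r : ℝ}
    (hr : 0 < r) (hG : Tendsto G l atTop) (hFG : Tendsto (fun x => F x / G x) l (𝓝 r)) :
    Tendsto (fun x => log (F x) / log (G x)) l (𝓝 1) := by
  have hlim := ((hFG.log hr.ne').div_atTop (tendsto_log_atTop.comp hG)).add_const 1
  rw [zero_add] at hlim
  refine hlim.congr' ?_
  filter_upwards [hG.eventually_gt_atTop 1, hFG.eventually (eventually_gt_nhds hr)]
    with x hG1 hFGpos
  have hGpos : 0 < G x := zero_lt_one.trans hG1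
  have hFpos : 0 < F x := (div_pos_iff_of_pos_right hGpos).mp hFGpos
  have : log (F x) = log (F x / G x) + log (G x) := by
    rw [log_div hFpos.ne' hGpos.ne', sub_add_cancel]
  rw [Function.comp_apply, this, add_div, div_self (log_pos hG1).ne']

lemma tendsto_const_mul_powLogLog_atTop {a : ℝ} (ha : 0 < a) {K : ℝ} (hK : 0 < K) (b c : ℝ) :
    Tendsto (fun τ => K * powLogLog a b c τ) atTop atTop := by
  have hlog : Tendsto (fun τ => log (K * powLogLog a b c τ)) atTop atTop := by
    refine ((tendsto_log_const_mul_powLogLog_div_log hK a b c).pos_mul_atTop ha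
      tendsto_log_atTop).congr' ?_
    filter_upwards [eventually_gt_atTop (exp 1)] with τ hτ
    exact div_mul_cancel₀ _ (pos_and_log_pos_and_log_log_pos hτ).2.1.ne'
  refine (tendsto_exp_comp_atTop.mpr hlog).congr' ?_
  filter_upwards [eventually_gt_atTop (exp 1)] with τ hτ
  exact exp_log (mul_pos hK (powLogLog_pos hτ))

lemma powLogLog_const_mul_powLogLog_inv_div {a : ℝ} (ha : 0 < a) {K : ℝ} (hK : 0 < K)
    (b c : ℝ) {τ : ℝ} (hτ : exp 1 < τ) (hu : exp 1 < K * powLogLog (1/a) (-b/a) (-c/a) τ) :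
    powLogLog a b c (K * powLogLog (1/a) (-b/a) (-c/a) τ) / τ =
      K ^ a * (log (K * powLogLog (1/a) (-b/a) (-c/a) τ) / log τ) ^ b *
        (log (log (K * powLogLog (1/a) (-b/a) (-c/a) τ)) / log (log τ)) ^ c := by
  set u := K * powLogLog (1/a) (-b/a) (-c/a) τ
  obtain ⟨h0, h1, h2⟩ := pos_and_log_pos_and_log_log_pos hτ
  obtain ⟨-, hu1, hu2⟩ := pos_and_log_pos_and_log_log_pos hu
  have hua : u ^ a = K ^ a * (τ * (log τ ^ b)⁻¹ * (log (log τ) ^ c)⁻¹) := by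
    rw [mul_rpow hK.le (powLogLog_pos hτ).le, powLogLog_rpow hτ,
      div_mul_cancel₀ _ ha.ne', div_mul_cancel₀ _ ha.ne', div_mul_cancel₀ _ ha.ne']
    simp only [powLogLog, rpow_one, rpow_neg h1.le, rpow_neg h2.le]
  rw [div_rpow hu1.le h1.le, div_rpow hu2.le h2.le, powLogLog, hua]
  field_simp

lemma tendsto_powLogLog_const_mul_powLogLog_inv_div {a : ℝ} (ha : 0 < a) {K : ℝ} (hK : 0 < K)
    (b c : ℝ) :
    Tendsto (fun τ => powLogLog a b c (K * powLogLog (1/a) (-b/a) (-c/a) τ) / τ) atTop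
      (𝓝 (K ^ a * (1/a) ^ b)) := by
  have hlog := tendsto_log_const_mul_powLogLog_div_log hK (1/a) (-b/a) (-c/a)
  have hloglog := tendsto_log_div_log_of_tendsto_div (one_div_pos.mpr ha) tendsto_log_atTop hlog
  have hlim := ((tendsto_const_nhds (x := K ^ a)).mul
    (hlog.rpow_const (p := b) (.inl (by positivity)))).mul
    (hloglog.rpow_const (p := c) (.inl one_ne_zero))
  rw [one_rpow, mul_one] at hlim
  refine hlim.congr' ?_
  filter_upwards [eventually_gt_atTop (exp 1),
    (tendsto_const_mul_powLogLog_atTop (one_div_pos.mpr ha) hK _ _).eventually_gt_atTop (exp 1)]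
    with τ hτ hu
  exact (powLogLog_const_mul_powLogLog_inv_div ha hK b c hτ hu).symm

lemma lt_of_apply_lt_of_rightInvOn {φ ψ : ℝ → ℝ} {L : ℝ}
    (hmono : StrictMonoOn φ (Set.Ioi L))
    (hinv : ∀ σ ∈ Set.Ioi (φ L), ψ σ ∈ Set.Ioi L ∧ φ (ψ σ) = σ)
    {x τ : ℝ} (hx : L < x) (hτ : φ L < τ) (h : φ x < τ) : x < ψ τ := by
  obtain ⟨hψ, hφψ⟩ := hinv τ hτ
  exact (hmono.lt_iff_lt hx hψ).mp (by rwa [hφψ])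

lemma lt_of_lt_apply_of_rightInvOn {φ ψ : ℝ → ℝ} {L : ℝ}
    (hmono : StrictMonoOn φ (Set.Ioi L))
    (hinv : ∀ σ ∈ Set.Ioi (φ L), ψ σ ∈ Set.Ioi L ∧ φ (ψ σ) = σ)
    {x τ : ℝ} (hx : L < x) (hτ : φ L < τ) (h : τ < φ x) : ψ τ < x := by
  obtain ⟨hψ, hφψ⟩ := hinv τ hτ
  exact (hmono.lt_iff_lt hψ hx).mp (by rwa [hφψ])

lemma eventually_rightInv_lt_const_mul_powLogLog {a b c : ℝ} (ha : 0 < a) {L : ℝ}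
    {φ ψ : ℝ → ℝ} (hφ : ∀ τ ∈ Set.Ioi L, φ τ = powLogLog a b c τ)
    (hmono : StrictMonoOn φ (Set.Ioi L))
    (hinv : ∀ σ ∈ Set.Ioi (φ L), ψ σ ∈ Set.Ioi L ∧ φ (ψ σ) = σ)
    {K : ℝ} (hK : 0 < K) (hKb : 1 < K ^ a * (1/a) ^ b) :
    ∀ᶠ τ in atTop, ψ τ < K * powLogLog (1/a) (-b/a) (-c/a) τ := by
  filter_upwards [(tendsto_powLogLog_const_mul_powLogLog_inv_div ha hK b c).eventually
      (eventually_gt_nhds hKb),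
    (tendsto_const_mul_powLogLog_atTop (one_div_pos.mpr ha) hK _ _).eventually_gt_atTop L,
    eventually_gt_atTop (φ L), eventually_gt_atTop 0] with τ hgt hu hτ h0
  refine lt_of_lt_apply_of_rightInvOn hmono hinv hu hτ ?_
  rwa [hφ _ hu, ← one_lt_div h0]

lemma eventually_const_mul_powLogLog_lt_rightInv {a b c : ℝ} (ha : 0 < a) {L : ℝ}
    {φ ψ : ℝ → ℝ} (hφ : ∀ τ ∈ Set.Ioi L, φ τ = powLogLog a b c τ)
    (hmono : StrictMonoOn φ (Set.Ioi L))
    (hinv : ∀ σ ∈ Set.Ioi (φ L), ψ σ ∈ Set.Ioi L ∧ φ (ψ σ) = σ)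
    {K : ℝ} (hK : 0 < K) (hKb : K ^ a * (1/a) ^ b < 1) :
    ∀ᶠ τ in atTop, K * powLogLog (1/a) (-b/a) (-c/a) τ < ψ τ := by
  filter_upwards [(tendsto_powLogLog_const_mul_powLogLog_inv_div ha hK b c).eventually
      (eventually_lt_nhds hKb),
    (tendsto_const_mul_powLogLog_atTop (one_div_pos.mpr ha) hK _ _).eventually_gt_atTop L,
    eventually_gt_atTop (φ L), eventually_gt_atTop 0] with τ hlt hu hτ h0
  refine lt_of_apply_lt_of_rightInvOn hmono hinv hu hτ ?_
  rwa [hφ _ hu, ← div_lt_one h0]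

theorem stmt_1_general (a b c : ℝ) (ha : 0 < a) (L : ℝ)
    (φ ψ : ℝ → ℝ)
    (hφ : ∀ τ ∈ Set.Ioi L, φ τ = τ ^ a * Real.log τ ^ b * Real.log (Real.log τ) ^ c)
    (hmono : StrictMonoOn φ (Set.Ioi L))
    (hinv₂ : ∀ σ ∈ Set.Ioi (φ L), ψ σ ∈ Set.Ioi L ∧ φ (ψ σ) = σ) :
    ∃ C : ℝ, 1 ≤ C ∧ ∃ M : ℝ, 0 < M ∧ ∀ τ : ℝ, M ≤ τ →
      C⁻¹ * (τ ^ (1/a) * Real.log τ ^ (-b/a) * Real.log (Real.log τ) ^ (-c/a)) ≤ ψ τ ∧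
      ψ τ ≤ C * (τ ^ (1/a) * Real.log τ ^ (-b/a) * Real.log (Real.log τ) ^ (-c/a)) := by
  set p : ℝ := (1/a) ^ b
  have hp : 0 < p := by positivity
  set X : ℝ := 1 + p + p⁻¹ with hX_def
  have hX : 1 ≤ X := by linarith [inv_pos.mpr hp]
  set K : ℝ := X ^ (1/a)
  have hK : 0 < K := by positivity
  have hKa : K ^ a = X := by rw [← rpow_mul (by positivity), one_div_mul_cancel ha.ne', rpow_one]
  have hupper := eventually_rightInv_lt_const_mul_powLogLog ha hφ hmono hinv₂ hK
    (by rw [hKa]; nlinarith [mul_inv_cancel₀ hp.ne'])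
  have hlower := eventually_const_mul_powLogLog_lt_rightInv ha hφ hmono hinv₂ (inv_pos.mpr hK)
    (by rw [inv_rpow hK.le, hKa, inv_mul_lt_one₀ (by positivity)]; linarith [inv_pos.mpr hp])
  obtain ⟨M, hM⟩ := (hupper.and hlower).exists_forall_of_atTop
  refine ⟨K, one_le_rpow hX (by positivity), max M 1, by positivity, fun τ hτ => ?_⟩
  obtain ⟨hψ_lt, lt_hψ⟩ := hM τ (le_of_max_le_left hτ)
  exact ⟨lt_hψ.le, hψ_lt.le⟩

theorem stmt_1 (a b c : ℝ) (ha : 0 < a) (L : ℝ) (hL : Real.exp 1 < L)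
    (φ ψ : ℝ → ℝ)
    (hφ : ∀ τ ∈ Set.Ioi L, φ τ = τ ^ a * Real.log τ ^ b * Real.log (Real.log τ) ^ c)
    (hmono : StrictMonoOn φ (Set.Ioi L))
    (hinv₁ : ∀ τ ∈ Set.Ioi L, ψ (φ τ) = τ)
    (hinv₂ : ∀ σ ∈ Set.Ioi (φ L), ψ σ ∈ Set.Ioi L ∧ φ (ψ σ) = σ) :
    ∃ C : ℝ, 1 ≤ C ∧ ∃ M : ℝ, 0 < M ∧ ∀ τ : ℝ, M ≤ τ →
      C⁻¹ * (τ ^ (1/a) * Real.log τ ^ (-b/a) * Real.log (Real.log τ) ^ (-c/a)) ≤ ψ τ ∧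
      ψ τ ≤ C * (τ ^ (1/a) * Real.log τ ^ (-b/a) * Real.log (Real.log τ) ^ (-c/a)) :=
  stmt_1_general a b c ha L φ ψ hφ hmono hinv₂
end

section
/- Let a>0, b≥0, and c ∈ ℝ. There exists C₁ > 0 such that for all A, B ∈ [2, ∞) with A ≤ B, ∫_A^B τ^{a-b-1} (log τ)^c dτ ≥ C₁ A^a B^{-b} (log A)^c log(B/A). -/
/-!
On `[A, B]` the integrand is `τ ^ a * log τ ^ c * τ ^ (-b) * τ⁻¹` with `τ ^ (-b) ≥ B ^ (-b)`.
The function `x ↦ x ^ a * log x ^ c` is increasing up to a constant factor on `[2, ∞)`: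
trivially for `c ≥ 0`, and for `c < 0` because `log y ≤ log x * log₂ (2y/x)` and
`log z ≤ z ^ ε / ε` with `ε = -a/c` cost at most a factor `(x/y) ^ a`, which `(y/x) ^ a` pays.
So the integrand is at least a constant times `A ^ a * B ^ (-b) * log A ^ c * τ⁻¹`, and
`∫ τ in A..B, τ⁻¹ = log (B / A)`.
-/

open Real Set intervalIntegral MeasureTheory

lemma continuousOn_rpow_mul_log_rpow (p c : ℝ) :
    ContinuousOn (fun τ : ℝ => τ ^ p * log τ ^ c) (Ioi 1) := by
  intro τ (hτ : 1 < τ)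
  have hτ0 : τ ≠ 0 := by positivity
  exact ((continuousAt_rpow_const τ p (.inl hτ0)).mul
    ((continuousAt_rpow_const _ c (.inl (log_pos hτ).ne')).comp
      (continuousAt_log hτ0))).continuousWithinAt

lemma intervalIntegrable_rpow_mul_log_rpow (p c : ℝ) {A B : ℝ} (hA : 1 < A) (hB : 1 < B) :
    IntervalIntegrable (fun τ : ℝ => τ ^ p * log τ ^ c) volume A B :=
  ((continuousOn_rpow_mul_log_rpow p c).mono
    (ordConnected_Ioi.uIcc_subset hA hB)).intervalIntegrable

lemma mul_log_div_le_integral {f : ℝ → ℝ} {K A B : ℝ} (hA : 0 < A) (hAB : A ≤ B)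
    (hf : IntervalIntegrable f volume A B) (hKf : ∀ τ ∈ Icc A B, K * τ⁻¹ ≤ f τ) :
    K * log (B / A) ≤ ∫ τ in A..B, f τ := by
  have h0 : (0 : ℝ) ∉ uIcc A B := notMem_uIcc_of_lt hA (hA.trans_le hAB)
  rw [← integral_inv h0, ← intervalIntegral.integral_const_mul]
  exact integral_mono_on hAB ((intervalIntegrable_inv (fun x hx => ne_of_mem_of_not_mem hx h0)
    continuousOn_id).const_mul K) hf hKf

lemma log_mul_log_two_le_log_mul_log_two_mul_div {x y : ℝ} (hx : 2 ≤ x) (hxy : x ≤ y) :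
    log y * log 2 ≤ log x * log (2 * y / x) := by
  have hx0 : 0 < x := by linarith
  have hy0 : 0 < y := by linarith
  rw [log_div (by positivity) hx0.ne', log_mul two_ne_zero (by positivity)]
  have h2x : log 2 ≤ log x := log_le_log two_pos hx
  have hxy' : log x ≤ log y := log_le_log hx0 hxy
  nlinarith [mul_nonneg (sub_nonneg.2 h2x) (sub_nonneg.2 hxy')]

lemma rpow_mul_log_rpow_le_of_nonneg {a c x y : ℝ} (ha : 0 ≤ a) (hc : 0 ≤ c) (hx : 1 ≤ x)
    (hxy : x ≤ y) : x ^ a * log x ^ c ≤ y ^ a * log y ^ c := by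
  have hlogx : 0 ≤ log x := log_nonneg hx
  have hy : 0 ≤ y := by linarith
  gcongr

lemma mul_rpow_mul_log_rpow_le_of_neg {a c x y : ℝ} (ha : 0 < a) (hc : c < 0) (hx : 2 ≤ x)
    (hxy : x ≤ y) :
    (-a / c * log 2) ^ (-c) / 2 ^ a * (x ^ a * log x ^ c) ≤ y ^ a * log y ^ c := by
  set ε := -a / c
  set z := 2 * y / x
  have hε : 0 < ε := div_pos_of_neg_of_neg (by linarith) hc
  have hx0 : 0 < x := by linarith
  have hy0 : 0 < y := by linarith
  have hz : 2 ≤ z := by rw [le_div_iff₀ hx0]; linarith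
  have hlog2 : 0 < log 2 := log_pos one_lt_two
  have hlogx : 0 < log x := log_pos (by linarith)
  have hlogz : 0 < log z := log_pos (by linarith)
  have hlogy : log y ≤ log x * (log z / log 2) := by
    rw [← mul_div_assoc, le_div_iff₀ hlog2]
    exact log_mul_log_two_le_log_mul_log_two_mul_div hx hxy
  have hlogy' : log x ^ c * (log z / log 2) ^ c ≤ log y ^ c := by
    rw [← mul_rpow hlogx.le (by positivity)]
    exact rpow_le_rpow_of_nonpos (log_pos (by linarith)) hlogy hc.le
  have hlogz' : (z ^ ε / (ε * log 2)) ^ c ≤ (log z / log 2) ^ c := by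
    refine rpow_le_rpow_of_nonpos (by positivity) ?_ hc.le
    rw [← div_div]
    gcongr
    exact log_le_rpow_div (by linarith) hε
  have hconst : (z ^ ε / (ε * log 2)) ^ c = (ε * log 2) ^ (-c) / 2 ^ a * x ^ a / y ^ a := by
    rw [div_rpow (by positivity) (by positivity), ← rpow_mul (by linarith : (0 : ℝ) ≤ z),
      div_mul_cancel₀ _ hc.ne, rpow_neg (by positivity), rpow_neg (by positivity),
      div_rpow (by positivity) hx0.le, mul_rpow zero_le_two hy0.le]
    field_simp
  calc (ε * log 2) ^ (-c) / 2 ^ a * (x ^ a * log x ^ c)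
      = y ^ a * (log x ^ c * (z ^ ε / (ε * log 2)) ^ c) := by
        rw [hconst]; field_simp
    _ ≤ y ^ a * (log x ^ c * (log z / log 2) ^ c) := by gcongr
    _ ≤ y ^ a * log y ^ c := by gcongr

lemma exists_pos_mul_rpow_mul_log_rpow_le (a c : ℝ) (ha : 0 < a) :
    ∃ C > 0, ∀ x y : ℝ, 2 ≤ x → x ≤ y →
      C * (x ^ a * log x ^ c) ≤ y ^ a * log y ^ c := by
  rcases le_or_gt 0 c with hc | hc
  · exact ⟨1, one_pos, fun x y hx hxy => by
      simpa using rpow_mul_log_rpow_le_of_nonneg ha.le hc (by linarith) hxy⟩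
  · have hε : 0 < -a / c := div_pos_of_neg_of_neg (by linarith) hc
    exact ⟨_, by have := log_pos one_lt_two; positivity,
      fun x y hx hxy => mul_rpow_mul_log_rpow_le_of_neg ha hc hx hxy⟩

theorem stmt_2 (a b c : ℝ) (ha : 0 < a) (hb : 0 ≤ b) :
    ∃ C₁ : ℝ, 0 < C₁ ∧ ∀ A B : ℝ, 2 ≤ A → A ≤ B →
      C₁ * (A ^ a * B ^ (-b) * Real.log A ^ c * Real.log (B / A)) ≤
        ∫ τ in A..B, τ ^ (a - b - 1) * Real.log τ ^ c := by
  obtain ⟨C, hC, hmono⟩ := exists_pos_mul_rpow_mul_log_rpow_le a c ha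
  refine ⟨C, hC, fun A B hA hAB => ?_⟩
  have hA0 : 0 < A := by linarith
  have hpointwise : ∀ τ ∈ Icc A B,
      C * (A ^ a * log A ^ c) * B ^ (-b) * τ⁻¹ ≤ τ ^ (a - b - 1) * log τ ^ c := by
    rintro τ ⟨hAτ, hτB⟩
    have hτ0 : 0 < τ := hA0.trans_le hAτ
    have hsplit : τ ^ (a - b - 1) * log τ ^ c = τ ^ a * log τ ^ c * τ ^ (-b) * τ⁻¹ := by
      rw [sub_eq_add_neg, rpow_add hτ0, sub_eq_add_neg, rpow_add hτ0, rpow_neg_one]; ring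
    have hlogτ : 0 ≤ log τ := log_nonneg (by linarith)
    rw [hsplit]
    exact mul_le_mul_of_nonneg_right (mul_le_mul (hmono A τ hA hAτ)
      (rpow_le_rpow_of_nonpos hτ0 hτB (neg_nonpos.2 hb)) (rpow_nonneg (by linarith) _)
      (by positivity)) (by positivity)
  calc C * (A ^ a * B ^ (-b) * log A ^ c * log (B / A))
      = C * (A ^ a * log A ^ c) * B ^ (-b) * log (B / A) := by ring
    _ ≤ _ := mul_log_div_le_integral hA0 hAB
      (intervalIntegrable_rpow_mul_log_rpow _ c (by linarith) (by linarith)) hpointwise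
end

section
/- Let p>1, d ∈ [1,p), q ∈ ℝ, R ≥ 0, and define f(τ) = 0 for τ ∈ [0,R] and f(τ) = τ^d ∫_R^τ s^{-d} (∫_R^s ξ^{p-2} [log(e+ξ)]^q dξ) ds for τ > R. Then f is convex on [0, ∞). -/
/-!
Write `G(s) = ∫_R^s ξ^(p-2) ℓ(ξ) dξ` and `H(τ) = ∫_R^τ s^(-d) G(s) ds` for a continuous
`ℓ ≥ 0` on `[0, ∞)` (here `ℓ(ξ) = log(e + ξ)^q`). On `[R, ∞)` the function is
`F(τ) = τ^d H(τ)`, with derivative `F' = d τ^(d-1) H + τ^d · τ^(-d) G = d τ^(d-1) H + G`.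
Since `d ≥ 1` and `G, H` are nonnegative and nondecreasing, `F'` is nondecreasing, so `F` is
convex; `F` is also nondecreasing with `F(R) = 0`, hence `f = F ∘ max(·, R)` is convex.
When `R = 0` the integrability of `s^(-d) G(s)` at `0` comes from `G(s) ≤ C s^(p-1)` and
`p - 1 - d > -1`.
-/

open Set MeasureTheory intervalIntegral Filter Topology

noncomputable def innerIntegral (p : ℝ) (ℓ : ℝ → ℝ) (R s : ℝ) : ℝ :=
  ∫ ξ in R..s, ξ ^ (p - 2) * ℓ ξ

noncomputable def outerIntegral (p d : ℝ) (ℓ : ℝ → ℝ) (R τ : ℝ) : ℝ :=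
  ∫ s in R..τ, s ^ (-d) * innerIntegral p ℓ R s

lemma ConvexOn.comp_max_const {g : ℝ → ℝ} {R : ℝ} (hg : ConvexOn ℝ (Ici R) g)
    (hg_mono : MonotoneOn g (Ici R)) : ConvexOn ℝ univ (fun x ↦ g (max x R)) := by
  have himage : (fun x ↦ max x R) '' univ = Ici R := by
    ext y
    refine ⟨fun ⟨x, _, hx⟩ ↦ hx ▸ le_max_right x R, fun hy ↦ ⟨y, trivial, max_eq_left hy⟩⟩
  rw [← himage] at hg hg_mono
  exact hg.comp ((convexOn_id convex_univ).sup (convexOn_const R convex_univ)) hg_mono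

section

variable {p d R : ℝ} {ℓ : ℝ → ℝ}

lemma intervalIntegrable_rpow_mul (hp : 1 < p) (hℓ : ContinuousOn ℓ (Ici 0)) {a b : ℝ}
    (ha : 0 ≤ a) (hb : 0 ≤ b) :
    IntervalIntegrable (fun ξ ↦ ξ ^ (p - 2) * ℓ ξ) volume a b :=
  (intervalIntegrable_rpow' (by linarith)).mul_continuousOn
    (hℓ.mono fun _ hx ↦ (le_inf ha hb).trans hx.1)

lemma continuousOn_rpow_mul (hℓ : ContinuousOn ℓ (Ici 0)) :
    ContinuousOn (fun ξ ↦ ξ ^ (p - 2) * ℓ ξ) (Ioi 0) :=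
  (continuousOn_id.rpow_const fun _ hx ↦ Or.inl (ne_of_gt hx)).mul
    (hℓ.mono Ioi_subset_Ici_self)

lemma innerIntegral_nonneg (hR : 0 ≤ R) (hℓ₀ : ∀ ξ, 0 ≤ ξ → 0 ≤ ℓ ξ) {s : ℝ} (hs : R ≤ s) :
    0 ≤ innerIntegral p ℓ R s :=
  integral_nonneg hs fun ξ hξ ↦
    mul_nonneg (Real.rpow_nonneg (hR.trans hξ.1) _) (hℓ₀ ξ (hR.trans hξ.1))

lemma monotoneOn_innerIntegral (hp : 1 < p) (hR : 0 ≤ R) (hℓ : ContinuousOn ℓ (Ici 0))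
    (hℓ₀ : ∀ ξ, 0 ≤ ξ → 0 ≤ ℓ ξ) : MonotoneOn (innerIntegral p ℓ R) (Ici R) :=
  fun _ hx _ hy hxy ↦ integral_mono_interval le_rfl hx hxy
    ((ae_restrict_iff' measurableSet_Ioc).mpr (ae_of_all _ fun ξ hξ ↦
      mul_nonneg (Real.rpow_nonneg (hR.trans hξ.1.le) _) (hℓ₀ ξ (hR.trans hξ.1.le))))
    (intervalIntegrable_rpow_mul hp hℓ hR (hR.trans hy))

lemma innerIntegral_le (hp : 1 < p) (hR : 0 ≤ R) (hℓ : ContinuousOn ℓ (Ici 0))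
    (hℓ₀ : ∀ ξ, 0 ≤ ξ → 0 ≤ ℓ ξ) {M s : ℝ} (hM : ∀ ξ ∈ Icc 0 s, ℓ ξ ≤ M) (hs : R ≤ s) :
    innerIntegral p ℓ R s ≤ M / (p - 1) * s ^ (p - 1) := by
  have hs₀ : 0 ≤ s := hR.trans hs
  have hint := intervalIntegrable_rpow_mul hp hℓ le_rfl hs₀
  calc innerIntegral p ℓ R s ≤ ∫ ξ in 0..s, ξ ^ (p - 2) * ℓ ξ :=
        integral_mono_interval hR hs le_rfl
          ((ae_restrict_iff' measurableSet_Ioc).mpr (ae_of_all _ fun ξ hξ ↦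
            mul_nonneg (Real.rpow_nonneg hξ.1.le _) (hℓ₀ ξ hξ.1.le))) hint
    _ ≤ ∫ ξ in 0..s, ξ ^ (p - 2) * M :=
        integral_mono_on hs₀ hint ((intervalIntegrable_rpow' (by linarith)).mul_const M)
          fun ξ hξ ↦ mul_le_mul_of_nonneg_left (hM ξ hξ) (Real.rpow_nonneg hξ.1 _)
    _ = M / (p - 1) * s ^ (p - 1) := by
        rw [intervalIntegral.integral_mul_const, integral_rpow (Or.inl (by linarith)),
          show p - 2 + 1 = p - 1 by ring, Real.zero_rpow (by linarith)]
        ring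

lemma hasDerivAt_innerIntegral (hp : 1 < p) (hR : 0 ≤ R) (hℓ : ContinuousOn ℓ (Ici 0))
    {s : ℝ} (hs : R < s) : HasDerivAt (innerIntegral p ℓ R) (s ^ (p - 2) * ℓ s) s := by
  have hs₀ : 0 < s := hR.trans_lt hs
  exact integral_hasDerivAt_right (intervalIntegrable_rpow_mul hp hℓ hR hs₀.le)
    ((continuousOn_rpow_mul hℓ).stronglyMeasurableAtFilter isOpen_Ioi s hs₀)
    ((continuousOn_rpow_mul hℓ).continuousAt (Ioi_mem_nhds hs₀))

lemma continuousOn_outerIntegrand (hp : 1 < p) (hR : 0 ≤ R) (hℓ : ContinuousOn ℓ (Ici 0)) :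
    ContinuousOn (fun s ↦ s ^ (-d) * innerIntegral p ℓ R s) (Ioi R) := fun _ hs ↦
  ((Real.continuousAt_rpow_const _ _ (Or.inl (hR.trans_lt hs).ne')).mul
    (hasDerivAt_innerIntegral hp hR hℓ hs).continuousAt).continuousWithinAt

lemma intervalIntegrable_outerIntegrand (hp : 1 < p) (hdp : d < p) (hR : 0 ≤ R)
    (hℓ : ContinuousOn ℓ (Ici 0)) (hℓ₀ : ∀ ξ, 0 ≤ ξ → 0 ≤ ℓ ξ) {τ : ℝ} (hτ : R ≤ τ) :
    IntervalIntegrable (fun s ↦ s ^ (-d) * innerIntegral p ℓ R s) volume R τ := by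
  obtain ⟨M, hM⟩ := isCompact_Icc.exists_bound_of_continuousOn
    (hℓ.mono (Icc_subset_Ici_self : Icc 0 τ ⊆ Ici 0))
  refine IntervalIntegrable.mono_fun'
    ((intervalIntegrable_rpow' (by linarith : -1 < p - 1 - d)).const_mul (M / (p - 1))) ?_ ?_
  · rw [uIoc_of_le hτ]
    exact ((continuousOn_outerIntegrand hp hR hℓ).mono Ioc_subset_Ioi_self).aestronglyMeasurable
      measurableSet_Ioc
  · rw [uIoc_of_le hτ]
    refine (ae_restrict_iff' measurableSet_Ioc).mpr (ae_of_all _ fun s hs ↦ ?_)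
    have hs₀ : 0 < s := hR.trans_lt hs.1
    have hinner := innerIntegral_le hp hR hℓ hℓ₀
      (fun ξ hξ ↦ (le_abs_self _).trans (hM ξ ⟨hξ.1, hξ.2.trans hs.2⟩)) hs.1.le
    calc ‖s ^ (-d) * innerIntegral p ℓ R s‖ = s ^ (-d) * innerIntegral p ℓ R s :=
          Real.norm_of_nonneg (mul_nonneg (Real.rpow_nonneg hs₀.le _)
            (innerIntegral_nonneg hR hℓ₀ hs.1.le))
      _ ≤ s ^ (-d) * (M / (p - 1) * s ^ (p - 1)) :=
          mul_le_mul_of_nonneg_left hinner (Real.rpow_nonneg hs₀.le _)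
      _ = M / (p - 1) * s ^ (p - 1 - d) := by
          rw [show p - 1 - d = -d + (p - 1) by ring, Real.rpow_add hs₀]
          ring

lemma hasDerivAt_outerIntegral (hp : 1 < p) (hdp : d < p) (hR : 0 ≤ R)
    (hℓ : ContinuousOn ℓ (Ici 0)) (hℓ₀ : ∀ ξ, 0 ≤ ξ → 0 ≤ ℓ ξ) {τ : ℝ} (hτ : R < τ) :
    HasDerivAt (outerIntegral p d ℓ R) (τ ^ (-d) * innerIntegral p ℓ R τ) τ :=
  integral_hasDerivAt_right (intervalIntegrable_outerIntegrand hp hdp hR hℓ hℓ₀ hτ.le)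
    ((continuousOn_outerIntegrand hp hR hℓ).stronglyMeasurableAtFilter isOpen_Ioi τ hτ)
    ((continuousOn_outerIntegrand hp hR hℓ).continuousAt (Ioi_mem_nhds hτ))

lemma continuousOn_outerIntegral (hp : 1 < p) (hdp : d < p) (hR : 0 ≤ R)
    (hℓ : ContinuousOn ℓ (Ici 0)) (hℓ₀ : ∀ ξ, 0 ≤ ξ → 0 ≤ ℓ ξ) :
    ContinuousOn (outerIntegral p d ℓ R) (Ici R) := by
  intro τ hτ
  have hτ₁ : R ≤ τ + 1 := by linarith [mem_Ici.mp hτ]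
  have hcont := continuousOn_primitive_interval'
    (intervalIntegrable_outerIntegrand hp hdp hR hℓ hℓ₀ hτ₁) left_mem_uIcc
  rw [uIcc_of_le hτ₁] at hcont
  exact (hcont τ ⟨hτ, by linarith⟩).mono_of_mem_nhdsWithin
    (mem_of_superset (inter_mem_nhdsWithin _ (Iio_mem_nhds (lt_add_one τ)))
      fun x hx ↦ ⟨hx.1, hx.2.le⟩)

lemma outerIntegral_nonneg (hR : 0 ≤ R) (hℓ₀ : ∀ ξ, 0 ≤ ξ → 0 ≤ ℓ ξ) {τ : ℝ} (hτ : R ≤ τ) :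
    0 ≤ outerIntegral p d ℓ R τ :=
  integral_nonneg hτ fun _ hs ↦
    mul_nonneg (Real.rpow_nonneg (hR.trans hs.1) _) (innerIntegral_nonneg hR hℓ₀ hs.1)

lemma monotoneOn_outerIntegral (hp : 1 < p) (hdp : d < p) (hR : 0 ≤ R)
    (hℓ : ContinuousOn ℓ (Ici 0)) (hℓ₀ : ∀ ξ, 0 ≤ ξ → 0 ≤ ℓ ξ) :
    MonotoneOn (outerIntegral p d ℓ R) (Ici R) :=
  fun _ hx _ hy hxy ↦ integral_mono_interval le_rfl hx hxy
    ((ae_restrict_iff' measurableSet_Ioc).mpr (ae_of_all _ fun _ hs ↦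
      mul_nonneg (Real.rpow_nonneg (hR.trans hs.1.le) _) (innerIntegral_nonneg hR hℓ₀ hs.1.le)))
    (intervalIntegrable_outerIntegrand hp hdp hR hℓ hℓ₀ hy)

lemma monotoneOn_rpow_mul_outerIntegral (hp : 1 < p) (hdp : d < p) (hR : 0 ≤ R)
    (hℓ : ContinuousOn ℓ (Ici 0)) (hℓ₀ : ∀ ξ, 0 ≤ ξ → 0 ≤ ℓ ξ) {e : ℝ} (he : 0 ≤ e) :
    MonotoneOn (fun τ ↦ τ ^ e * outerIntegral p d ℓ R τ) (Ici R) :=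
  MonotoneOn.mul (fun _ hx _ _ hxy ↦ Real.rpow_le_rpow (hR.trans hx) hxy he)
    (monotoneOn_outerIntegral hp hdp hR hℓ hℓ₀)
    (fun _ hx ↦ Real.rpow_nonneg (hR.trans hx) _) (fun _ hx ↦ outerIntegral_nonneg hR hℓ₀ hx)

lemma hasDerivAt_rpow_mul_outerIntegral (hp : 1 < p) (hdp : d < p) (hR : 0 ≤ R)
    (hℓ : ContinuousOn ℓ (Ici 0)) (hℓ₀ : ∀ ξ, 0 ≤ ξ → 0 ≤ ℓ ξ) {τ : ℝ} (hτ : R < τ) :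
    HasDerivAt (fun τ ↦ τ ^ d * outerIntegral p d ℓ R τ)
      (d * (τ ^ (d - 1) * outerIntegral p d ℓ R τ) + innerIntegral p ℓ R τ) τ := by
  have hτ₀ : 0 < τ := hR.trans_lt hτ
  have hcancel : τ ^ d * (τ ^ (-d) * innerIntegral p ℓ R τ) = innerIntegral p ℓ R τ := by
    rw [← mul_assoc, ← Real.rpow_add hτ₀, add_neg_cancel, Real.rpow_zero, one_mul]
  refine ((Real.hasDerivAt_rpow_const (Or.inl hτ₀.ne')).mul
    (hasDerivAt_outerIntegral hp hdp hR hℓ hℓ₀ hτ)).congr_deriv ?_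
  rw [hcancel]
  ring

lemma convexOn_rpow_mul_outerIntegral (hp : 1 < p) (hd : 1 ≤ d) (hdp : d < p) (hR : 0 ≤ R)
    (hℓ : ContinuousOn ℓ (Ici 0)) (hℓ₀ : ∀ ξ, 0 ≤ ξ → 0 ≤ ℓ ξ) :
    ConvexOn ℝ (Ici R) (fun τ ↦ τ ^ d * outerIntegral p d ℓ R τ) := by
  have hderiv := fun τ (hτ : τ ∈ Ioi R) ↦ hasDerivAt_rpow_mul_outerIntegral hp hdp hR hℓ hℓ₀ hτ
  have hcont : ContinuousOn (fun τ ↦ τ ^ d * outerIntegral p d ℓ R τ) (Ici R) :=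
    (continuousOn_id.rpow_const fun _ _ ↦ Or.inr (by linarith)).mul
      (continuousOn_outerIntegral hp hdp hR hℓ hℓ₀)
  refine MonotoneOn.convexOn_of_deriv (convex_Ici R) hcont ?_ ?_ <;> rw [interior_Ici]
  · exact fun τ hτ ↦ (hderiv τ hτ).differentiableAt.differentiableWithinAt
  · intro x hx y hy hxy
    rw [(hderiv x hx).deriv, (hderiv y hy).deriv]
    exact add_le_add
      (mul_le_mul_of_nonneg_left (monotoneOn_rpow_mul_outerIntegral hp hdp hR hℓ hℓ₀
        (by linarith) (Ioi_subset_Ici_self hx) (Ioi_subset_Ici_self hy) hxy) (by linarith))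
      (monotoneOn_innerIntegral hp hR hℓ hℓ₀ (Ioi_subset_Ici_self hx) (Ioi_subset_Ici_self hy) hxy)

end

lemma one_le_log_exp_one_add {ξ : ℝ} (hξ : 0 ≤ ξ) : 1 ≤ Real.log (Real.exp 1 + ξ) := by
  rw [Real.le_log_iff_exp_le (by positivity)]
  linarith

theorem stmt_5 (p d q R : ℝ) (hp : 1 < p) (hd1 : 1 ≤ d) (hdp : d < p) (hR : 0 ≤ R)
    (f : ℝ → ℝ)
    (hf0 : ∀ τ ∈ Set.Icc (0:ℝ) R, f τ = 0)
    (hf : ∀ τ : ℝ, R < τ →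
      f τ = τ ^ d * ∫ s in R..τ, s ^ (-d) *
        ∫ ξ in R..s, ξ ^ (p-2) * Real.log (Real.exp 1 + ξ) ^ q) :
    ConvexOn ℝ (Set.Ici 0) f := by
  set ℓ : ℝ → ℝ := fun ξ ↦ Real.log (Real.exp 1 + ξ) ^ q
  have hℓ : ContinuousOn ℓ (Ici 0) := fun ξ (hξ : 0 ≤ ξ) ↦
    (ContinuousAt.log (f := fun x ↦ Real.exp 1 + x) (by fun_prop) (by positivity)).rpow_const
      (Or.inl (by linarith [one_le_log_exp_one_add hξ])) |>.continuousWithinAt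
  have hℓ₀ : ∀ ξ, 0 ≤ ξ → 0 ≤ ℓ ξ := fun ξ hξ ↦
    Real.rpow_nonneg (by linarith [one_le_log_exp_one_add hξ]) _
  have hF := (convexOn_rpow_mul_outerIntegral hp hd1 hdp hR hℓ hℓ₀).comp_max_const
    (monotoneOn_rpow_mul_outerIntegral hp hdp hR hℓ hℓ₀ (by linarith))
  refine (hF.subset (subset_univ _) (convex_Ici 0)).congr fun τ hτ ↦ ?_
  dsimp only
  rcases le_or_gt τ R with hτR | hτR
  · rw [hf0 τ ⟨hτ, hτR⟩, max_eq_right hτR, outerIntegral, integral_same, mul_zero]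
  · rw [hf τ hτR, max_eq_left hτR.le]
    rfl
end

section
/- Let p>1, d ∈ [1,p), q ∈ ℝ, R ≥ 0, and define f(τ) = 0 for τ ∈ [0,R] and f(τ) = τ^d ∫_R^τ s^{-d} (∫_R^s ξ^{p-2} [log(e+ξ)]^q dξ) ds for τ > R. Then f(τ) ≍ τ^p (log τ)^q as τ → ∞, i.e. there exist C ≥ 1 and M > max{4R, e} such that C⁻¹ τ^p (log τ)^q ≤ f(τ) ≤ C τ^p (log τ)^q for all τ ≥ M. -/
/-!
Everything rests on one principle: if `g ≥ 0` and `g(s) ≍ s^(r-1) (log s)^q` with `r > 0`, then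
`∫_a^τ g ≍ τ^r (log τ)^q`. Indeed `τ^r (log τ)^q` tends to infinity and its derivative
`s^(r-1) (log s)^q (r + q / log s)` is `≍ s^(r-1) (log s)^q`, while `≍` passes to primitives of
eventually nonnegative functions as soon as one of the primitives diverges: a bounded initial
piece is absorbed by the divergent tail.

Since `log (e + ξ) ~ log ξ`, the principle with `r = p - 1` gives
`∫_R^s ξ^(p-2) (log (e + ξ))^q dξ ≍ s^(p-1) (log s)^q`, and then with `r = p - d` it gives
`f(τ) ≍ τ^d · τ^(p-d) (log τ)^q`. The only delicate point is the
integrability of the outer integrand near `s = R` when `R = 0`: there the inner integral is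
`O(s^(p-1))`, so the integrand is `O(s^(p-1-d))` with `p - 1 - d > -1`.
-/

open Real Filter Asymptotics MeasureTheory Set Topology

section Primitive

variable {g h : ℝ → ℝ} {a b : ℝ}

lemma norm_integral_le_of_norm_le_mul {c τ C : ℝ} (hcτ : c ≤ τ)
    (hgc : IntervalIntegrable g volume a c) (hgτ : IntervalIntegrable g volume a τ)
    (hhc : IntervalIntegrable h volume b c) (hhτ : IntervalIntegrable h volume b τ)
    (hgh : ∀ s ∈ Icc c τ, ‖g s‖ ≤ C * h s) :
    ‖∫ s in a..τ, g s‖ ≤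
      ‖∫ s in a..c, g s‖ + C * ((∫ s in b..τ, h s) - ∫ s in b..c, h s) := by
  rw [intervalIntegral.integral_interval_sub_left hhτ hhc,
    ← intervalIntegral.integral_const_mul,
    ← intervalIntegral.integral_add_adjacent_intervals hgc (hgc.symm.trans hgτ)]
  refine (norm_add_le _ _).trans (add_le_add_right ?_ _)
  exact intervalIntegral.norm_integral_le_of_norm_le hcτ
    (ae_of_all _ fun s hs => hgh s (Ioc_subset_Icc_self hs)) ((hhc.symm.trans hhτ).const_mul C)

lemma exists_norm_integral_le_of_isBigO (hgh : g =O[atTop] h) (hh : 0 ≤ᶠ[atTop] h)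
    (hgi : ∀ᶠ τ in atTop, IntervalIntegrable g volume a τ)
    (hhi : ∀ᶠ τ in atTop, IntervalIntegrable h volume b τ) :
    ∃ C K : ℝ, 0 < C ∧
      ∀ᶠ τ in atTop, ‖∫ s in a..τ, g s‖ ≤ K + C * ∫ s in b..τ, h s := by
  obtain ⟨C, hC, hCgh⟩ := hgh.exists_pos
  obtain ⟨c, hc⟩ := eventually_atTop.1 (hCgh.bound.and (hh.and (hgi.and hhi)))
  refine ⟨C, ‖∫ s in a..c, g s‖ - C * ∫ s in b..c, h s, hC, ?_⟩
  filter_upwards [eventually_ge_atTop c] with τ hτ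
  have hbound : ∀ s ∈ Icc c τ, ‖g s‖ ≤ C * h s := fun s hs => by
    obtain ⟨hgs, hhs, -⟩ := hc s hs.1
    rwa [Real.norm_of_nonneg hhs] at hgs
  have := norm_integral_le_of_norm_le_mul hτ (hc c le_rfl).2.2.1 (hc τ hτ).2.2.1
    (hc c le_rfl).2.2.2 (hc τ hτ).2.2.2 hbound
  linarith

lemma isBigO_integral_of_isBigO (hgh : g =O[atTop] h) (hh : 0 ≤ᶠ[atTop] h)
    (hgi : ∀ᶠ τ in atTop, IntervalIntegrable g volume a τ)
    (hhi : ∀ᶠ τ in atTop, IntervalIntegrable h volume b τ)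
    (hH : Tendsto (fun τ => ∫ s in b..τ, h s) atTop atTop) :
    (fun τ => ∫ s in a..τ, g s) =O[atTop] fun τ => ∫ s in b..τ, h s := by
  obtain ⟨C, K, -, hCK⟩ := exists_norm_integral_le_of_isBigO hgh hh hgi hhi
  refine .of_bound (C + 1) ?_
  filter_upwards [hCK, hH.eventually_ge_atTop K, hH.eventually_ge_atTop 0] with τ hτ hK h0
  rw [Real.norm_of_nonneg h0]
  linarith

lemma tendsto_integral_atTop_of_isBigO (hhg : h =O[atTop] g) (hg : 0 ≤ᶠ[atTop] g)
    (hgi : ∀ᶠ τ in atTop, IntervalIntegrable g volume a τ)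
    (hhi : ∀ᶠ τ in atTop, IntervalIntegrable h volume b τ)
    (hH : Tendsto (fun τ => ∫ s in b..τ, h s) atTop atTop) :
    Tendsto (fun τ => ∫ s in a..τ, g s) atTop atTop := by
  obtain ⟨C, K, hC, hCK⟩ := exists_norm_integral_le_of_isBigO hhg hg hhi hgi
  refine tendsto_atTop_mono' _ ?_
    ((tendsto_atTop_add_const_right _ (-K) hH).atTop_div_const hC)
  filter_upwards [hCK] with τ hτ
  rw [div_le_iff₀ hC]
  linarith [le_norm_self (∫ s in b..τ, h s)]

lemma isTheta_integral_of_isTheta (hgh : g =Θ[atTop] h) (hg : 0 ≤ᶠ[atTop] g)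
    (hh : 0 ≤ᶠ[atTop] h) (hgi : ∀ᶠ τ in atTop, IntervalIntegrable g volume a τ)
    (hhi : ∀ᶠ τ in atTop, IntervalIntegrable h volume b τ)
    (hH : Tendsto (fun τ => ∫ s in b..τ, h s) atTop atTop) :
    (fun τ => ∫ s in a..τ, g s) =Θ[atTop] fun τ => ∫ s in b..τ, h s :=
  ⟨isBigO_integral_of_isBigO hgh.1 hh hgi hhi hH,
    isBigO_integral_of_isBigO hgh.2 hg hhi hgi
      (tendsto_integral_atTop_of_isBigO hgh.2 hg hgi hhi hH)⟩

end Primitive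

section RpowLog

variable {r : ℝ}

lemma tendsto_rpow_mul_log_rpow_atTop (hr : 0 < r) (q : ℝ) :
    Tendsto (fun τ => τ ^ r * log τ ^ q) atTop atTop := by
  refine ((tendsto_exp_mul_div_rpow_atTop (-q) r hr).comp tendsto_log_atTop).congr' ?_
  filter_upwards [eventually_gt_atTop 1] with τ hτ
  rw [Function.comp_apply, rpow_neg (log_pos hτ).le, div_inv_eq_mul,
    rpow_def_of_pos (by linarith : (0:ℝ) < τ) r, mul_comm r]

lemma hasDerivAt_rpow_mul_log_rpow (r q : ℝ) {τ : ℝ} (hτ : 1 < τ) :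
    HasDerivAt (fun τ => τ ^ r * log τ ^ q)
      (τ ^ (r - 1) * log τ ^ q * (r + q / log τ)) τ := by
  have hτ0 : τ ≠ 0 := by positivity
  have hl : log τ ≠ 0 := (log_pos hτ).ne'
  refine ((hasDerivAt_rpow_const (p := r) (Or.inl hτ0)).mul
    ((hasDerivAt_log hτ0).rpow_const (p := q) (Or.inl hl))).congr_deriv ?_
  rw [rpow_sub_one hτ0, rpow_sub_one hl]
  field_simp

lemma isTheta_integral_of_isTheta_rpow_mul_log_rpow {g : ℝ → ℝ} {a : ℝ} (q : ℝ)
    (hr : 0 < r)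
    (hg : g =Θ[atTop] fun s => s ^ (r - 1) * log s ^ q) (hg0 : 0 ≤ᶠ[atTop] g)
    (hgi : ∀ᶠ τ in atTop, IntervalIntegrable g volume a τ) :
    (fun τ => ∫ s in a..τ, g s) =Θ[atTop] fun τ => τ ^ r * log τ ^ q := by
  set F := fun τ : ℝ => τ ^ r * log τ ^ q
  set F' := fun τ : ℝ => τ ^ (r - 1) * log τ ^ q * (r + q / log τ)
  have hF : Tendsto F atTop atTop := tendsto_rpow_mul_log_rpow_atTop hr q
  have hF'cont : ContinuousOn F' (Ioi 1) := fun τ (hτ : 1 < τ) => by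
    have hτ0 : τ ≠ 0 := by positivity
    have hl : log τ ≠ 0 := (log_pos hτ).ne'
    exact (((continuousAt_id.rpow_const (Or.inl hτ0)).mul
      ((continuousAt_log hτ0).rpow_const (Or.inl hl))).mul
      (continuousAt_const.add
        (continuousAt_const.div (continuousAt_log hτ0) hl))).continuousWithinAt
  have hF'int : ∀ᶠ τ in atTop, IntervalIntegrable F' volume 2 τ := by
    filter_upwards [eventually_ge_atTop 2] with τ hτ
    refine (hF'cont.mono fun s hs => ?_).intervalIntegrable
    rw [uIcc_of_le hτ] at hs
    exact one_lt_two.trans_le hs.1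
  have hFTC : (fun τ => ∫ s in (2:ℝ)..τ, F' s) =ᶠ[atTop] fun τ => F τ - F 2 := by
    filter_upwards [hF'int, eventually_ge_atTop 2] with τ hτi hτ
    refine intervalIntegral.integral_eq_sub_of_hasDerivAt (fun s hs => ?_) hτi
    rw [uIcc_of_le hτ] at hs
    exact hasDerivAt_rpow_mul_log_rpow r q (one_lt_two.trans_le hs.1)
  have hfactor : Tendsto (fun τ => r + q / log τ) atTop (𝓝 r) := by
    simpa using tendsto_const_nhds.add (tendsto_const_nhds.div_atTop tendsto_log_atTop)
  have hF'Θ : F' =Θ[atTop] fun s => s ^ (r - 1) * log s ^ q := by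
    simpa using (isTheta_refl (fun s => s ^ (r - 1) * log s ^ q) atTop).mul
      (isTheta_of_div_tendsto_nhds_ne_zero (f := fun _ => (1:ℝ))
        (by simpa using hfactor) hr.ne').symm
  have hF'0 : 0 ≤ᶠ[atTop] F' := by
    filter_upwards [hfactor.eventually_const_lt hr, eventually_ge_atTop 1] with τ hk hτ
    exact mul_nonneg
      (mul_nonneg (rpow_nonneg (by linarith) _) (rpow_nonneg (log_nonneg hτ) _)) hk.le
  have hH : Tendsto (fun τ => ∫ s in (2:ℝ)..τ, F' s) atTop atTop :=
    (tendsto_atTop_add_const_right _ (-F 2) hF).congr'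
      (by simpa [sub_eq_add_neg] using hFTC.symm)
  have hshift : (fun τ => F τ - F 2) =Θ[atTop] F :=
    (IsEquivalent.refl.sub_isLittleO
      (isLittleO_const_left (c := F 2).2 (Or.inr (tendsto_norm_atTop_atTop.comp hF)))).isTheta
  exact (isTheta_integral_of_isTheta (hg.trans hF'Θ.symm) hg0 hF'0 hgi hF'int hH).trans
    (hFTC.isTheta.trans hshift)

lemma isTheta_rpow_mul_of_isTheta {G : ℝ → ℝ} {q : ℝ} (a : ℝ)
    (hG : G =Θ[atTop] fun τ => τ ^ r * log τ ^ q) :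
    (fun τ => τ ^ a * G τ) =Θ[atTop] fun τ => τ ^ (a + r) * log τ ^ q := by
  refine ((isTheta_refl (fun τ : ℝ => τ ^ a) _).mul hG).trans_eventuallyEq ?_
  filter_upwards [eventually_gt_atTop 0] with τ hτ
  rw [← mul_assoc, ← rpow_add hτ]

end RpowLog

lemma continuousOn_log_exp_one_add_rpow (q : ℝ) :
    ContinuousOn (fun ξ => log (exp 1 + ξ) ^ q) (Ici 0) := fun ξ (hξ : 0 ≤ ξ) => by
  have hpos : 0 < exp 1 + ξ := by linarith [exp_pos 1]
  have hlog : 0 < log (exp 1 + ξ) := log_pos (by linarith [add_one_le_exp 1])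
  exact ((ContinuousAt.log (by fun_prop) hpos.ne').rpow_const
    (Or.inl hlog.ne')).continuousWithinAt

lemma isTheta_log_exp_one_add_rpow (q : ℝ) :
    (fun ξ => log (exp 1 + ξ) ^ q) =Θ[atTop] fun ξ => log ξ ^ q := by
  have hlog : (fun ξ => log (exp 1 + ξ)) ~[atTop] log :=
    (IsEquivalent.refl.const_add_of_norm_tendsto_atTop
      (tendsto_norm_atTop_atTop.comp tendsto_id)).log tendsto_id
  refine hlog.isTheta.rpow ?_ ?_
  · filter_upwards [eventually_ge_atTop 0] with ξ hξ
    exact log_nonneg (by linarith [add_one_le_exp 1])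
  · filter_upwards [eventually_ge_atTop 1] with ξ hξ
    exact log_nonneg hξ

section SingularIntegrand

variable {p R : ℝ} {φ : ℝ → ℝ}

lemma norm_integral_rpow_mul_le {s K : ℝ} (hp : 1 < p) (hR : 0 ≤ R) (hRs : R ≤ s)
    (hφ : ∀ ξ ∈ Icc R s, ‖φ ξ‖ ≤ K) :
    ‖∫ ξ in R..s, ξ ^ (p - 2) * φ ξ‖ ≤ K * s ^ (p - 1) / (p - 1) := by
  have hK : 0 ≤ K := (norm_nonneg _).trans (hφ R ⟨le_rfl, hRs⟩)
  calc ‖∫ ξ in R..s, ξ ^ (p - 2) * φ ξ‖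
      ≤ ∫ ξ in R..s, K * ξ ^ (p - 2) := by
        refine intervalIntegral.norm_integral_le_of_norm_le hRs (ae_of_all _ fun ξ hξ => ?_)
          ((intervalIntegral.intervalIntegrable_rpow' (by linarith)).const_mul K)
        rw [norm_mul, norm_of_nonneg (rpow_nonneg (hR.trans hξ.1.le) _), mul_comm K]
        exact mul_le_mul_of_nonneg_left (hφ ξ (Ioc_subset_Icc_self hξ))
          (rpow_nonneg (hR.trans hξ.1.le) _)
    _ = K * ((s ^ (p - 1) - R ^ (p - 1)) / (p - 1)) := by
        rw [intervalIntegral.integral_const_mul, integral_rpow (Or.inl (by linarith))]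
        ring_nf
    _ ≤ K * s ^ (p - 1) / (p - 1) := by
        rw [mul_div_assoc]
        gcongr
        linarith [rpow_nonneg hR (p - 1)]

lemma intervalIntegrable_rpow_neg_mul_integral {d τ : ℝ} (hp : 1 < p) (hdp : d < p)
    (hR : 0 ≤ R) (hRτ : R ≤ τ) (hφ : ContinuousOn φ (Icc R τ)) :
    IntervalIntegrable (fun s => s ^ (-d) * ∫ ξ in R..s, ξ ^ (p - 2) * φ ξ) volume R τ := by
  obtain ⟨K, hK⟩ := isCompact_Icc.exists_bound_of_continuousOn hφ
  have hint : IntervalIntegrable (fun ξ => ξ ^ (p - 2) * φ ξ) volume R τ :=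
    (intervalIntegral.intervalIntegrable_rpow' (by linarith)).mul_continuousOn
      (by rwa [uIcc_of_le hRτ])
  have hG : ContinuousOn (fun s => ∫ ξ in R..s, ξ ^ (p - 2) * φ ξ) (Ioc R τ) :=
    (intervalIntegral.continuousOn_primitive_interval (by
      rw [uIcc_of_le hRτ]
      exact (intervalIntegrable_iff_integrableOn_Icc_of_le hRτ).1 hint)).mono
      (by rw [uIcc_of_le hRτ]; exact Ioc_subset_Icc_self)
  have hpow : ContinuousOn (fun s : ℝ => s ^ (-d)) (Ioc R τ) :=
    continuousOn_id.rpow_const fun s hs => Or.inl (hR.trans_lt hs.1).ne'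
  refine ((intervalIntegral.intervalIntegrable_rpow' (r := p - 1 - d)
    (by linarith)).const_mul (K / (p - 1))).mono_fun ?_ ?_
  · rw [uIoc_of_le hRτ]
    exact (hpow.mul hG).aestronglyMeasurable measurableSet_Ioc
  · refine (ae_restrict_iff' measurableSet_uIoc).2 (ae_of_all _ fun s hs => ?_)
    rw [uIoc_of_le hRτ] at hs
    have hs0 : 0 < s := hR.trans_lt hs.1
    have hGs := norm_integral_rpow_mul_le hp hR hs.1.le
      fun ξ hξ => hK ξ ⟨hξ.1, hξ.2.trans hs.2⟩
    refine le_trans ?_ (le_norm_self _)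
    calc ‖s ^ (-d) * ∫ ξ in R..s, ξ ^ (p - 2) * φ ξ‖
        ≤ s ^ (-d) * (K * s ^ (p - 1) / (p - 1)) := by
          rw [norm_mul, norm_of_nonneg (rpow_nonneg hs0.le _)]
          exact mul_le_mul_of_nonneg_left hGs (rpow_nonneg hs0.le _)
      _ = K / (p - 1) * s ^ (p - 1 - d) := by
          rw [sub_eq_neg_add (p - 1), rpow_add hs0]
          ring

end SingularIntegrand

lemma exists_inv_mul_le_and_le_mul_of_isTheta {α : Type*} {l : Filter α} {f g : α → ℝ}
    (h : f =Θ[l] g) (hf : 0 ≤ᶠ[l] f) (hg : 0 ≤ᶠ[l] g) :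
    ∃ C, 1 ≤ C ∧ ∀ᶠ x in l, C⁻¹ * g x ≤ f x ∧ f x ≤ C * g x := by
  obtain ⟨C₁, -, h₁⟩ := h.1.exists_nonneg
  obtain ⟨C₂, -, h₂⟩ := h.2.exists_nonneg
  refine ⟨max 1 (max C₁ C₂), le_max_left _ _, ?_⟩
  filter_upwards [h₁.bound, h₂.bound, hf, hg] with x h₁x h₂x hfx hgx
  rw [Pi.zero_apply] at hfx hgx
  rw [norm_of_nonneg hfx, norm_of_nonneg hgx] at h₁x h₂x
  have hC₁ : C₁ * g x ≤ max 1 (max C₁ C₂) * g x :=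
    mul_le_mul_of_nonneg_right ((le_max_left _ _).trans (le_max_right _ _)) hgx
  have hC₂ : C₂ * f x ≤ max 1 (max C₁ C₂) * f x :=
    mul_le_mul_of_nonneg_right ((le_max_right _ _).trans (le_max_right _ _)) hfx
  rw [inv_mul_le_iff₀ (by positivity)]
  exact ⟨h₂x.trans hC₂, h₁x.trans hC₁⟩

theorem stmt_6_general (p d q R : ℝ) (hp : 1 < p) (hdp : d < p) (hR : 0 ≤ R)
    (f : ℝ → ℝ)
    (hf : ∀ τ : ℝ, R < τ →
      f τ = τ ^ d * ∫ s in R..τ, s ^ (-d) *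
        ∫ ξ in R..s, ξ ^ (p-2) * Real.log (Real.exp 1 + ξ) ^ q) :
    ∃ C : ℝ, 1 ≤ C ∧ ∃ M : ℝ, max (4*R) (Real.exp 1) < M ∧ ∀ τ : ℝ, M ≤ τ →
      C⁻¹ * (τ ^ p * Real.log τ ^ q) ≤ f τ ∧ f τ ≤ C * (τ ^ p * Real.log τ ^ q) := by
  set w := fun ξ : ℝ => ξ ^ (p - 2) * log (exp 1 + ξ) ^ q
  set W := fun s : ℝ => s ^ (-d) * ∫ ξ in R..s, w ξ
  have hφ := (continuousOn_log_exp_one_add_rpow q).mono (Ici_subset_Ici.2 hR)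
  have hw0 : ∀ ξ, 0 ≤ ξ → 0 ≤ w ξ := fun ξ hξ =>
    mul_nonneg (rpow_nonneg hξ _) (rpow_nonneg (log_nonneg (by linarith [add_one_le_exp 1])) _)
  have hW0 : ∀ s, R ≤ s → 0 ≤ W s := fun s hs =>
    mul_nonneg (rpow_nonneg (hR.trans hs) _)
      (intervalIntegral.integral_nonneg hs fun ξ hξ => hw0 ξ (hR.trans hξ.1))
  have hwΘ : w =Θ[atTop] fun ξ => ξ ^ (p - 1 - 1) * log ξ ^ q := by
    rw [show p - 1 - 1 = p - 2 by ring]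
    exact (isTheta_refl _ _).mul (isTheta_log_exp_one_add_rpow q)
  have hGΘ := isTheta_integral_of_isTheta_rpow_mul_log_rpow (a := R) q (by linarith) hwΘ
    (eventually_ge_atTop 0 |>.mono hw0) (eventually_ge_atTop R |>.mono fun τ hτ =>
      (intervalIntegral.intervalIntegrable_rpow' (by linarith)).mul_continuousOn
        (hφ.mono (by rw [uIcc_of_le hτ]; exact Icc_subset_Ici_self)))
  have hWΘ := isTheta_rpow_mul_of_isTheta (-d) hGΘ
  rw [show -d + (p - 1) = p - d - 1 by ring] at hWΘ
  have hIΘ := isTheta_integral_of_isTheta_rpow_mul_log_rpow (a := R) q (by linarith) hWΘ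
    (eventually_ge_atTop R |>.mono hW0) (eventually_ge_atTop R |>.mono fun τ hτ =>
      intervalIntegrable_rpow_neg_mul_integral hp hdp hR hτ (hφ.mono Icc_subset_Ici_self))
  have hfΘ := isTheta_rpow_mul_of_isTheta d hIΘ
  rw [show d + (p - d) = p by ring] at hfΘ
  have hfeq : f =ᶠ[atTop] fun τ => τ ^ d * ∫ s in R..τ, W s :=
    eventually_gt_atTop R |>.mono hf
  obtain ⟨C, hC, hCf⟩ := exists_inv_mul_le_and_le_mul_of_isTheta (hfeq.trans_isTheta hfΘ)
    (by
      filter_upwards [hfeq, eventually_ge_atTop R] with τ hτ hRτ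
      rw [hτ]
      exact mul_nonneg (rpow_nonneg (hR.trans hRτ) _)
        (intervalIntegral.integral_nonneg hRτ fun s hs => hW0 s hs.1))
    (eventually_ge_atTop 1 |>.mono fun τ hτ =>
      mul_nonneg (rpow_nonneg (by linarith) _) (rpow_nonneg (log_nonneg hτ) _))
  obtain ⟨M, hM⟩ := eventually_atTop.1 hCf
  exact ⟨C, hC, max M (max (4 * R) (exp 1) + 1),
    by linarith [le_max_right M (max (4 * R) (exp 1) + 1)],
    fun τ hτ => hM τ (le_of_max_le_left hτ)⟩

theorem stmt_6 (p d q R : ℝ) (hp : 1 < p) (hd1 : 1 ≤ d) (hdp : d < p) (hR : 0 ≤ R)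
    (f : ℝ → ℝ)
    (hf0 : ∀ τ ∈ Set.Icc (0:ℝ) R, f τ = 0)
    (hf : ∀ τ : ℝ, R < τ →
      f τ = τ ^ d * ∫ s in R..τ, s ^ (-d) *
        ∫ ξ in R..s, ξ ^ (p-2) * Real.log (Real.exp 1 + ξ) ^ q) :
    ∃ C : ℝ, 1 ≤ C ∧ ∃ M : ℝ, max (4*R) (Real.exp 1) < M ∧ ∀ τ : ℝ, M ≤ τ →
      C⁻¹ * (τ ^ p * Real.log τ ^ q) ≤ f τ ∧ f τ ≤ C * (τ ^ p * Real.log τ ^ q) :=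
  stmt_6_general p d q R hp hdp hR f hf
end

section
/- Fix R > 0 and α > 0. Let G, H be positive functions on [R, ∞), G continuous and H continuously differentiable, such that: (a) for every a ≥ 1 and b > 0, G(aτ^b) ≍ G(τ) as τ → ∞; (b) H'(τ) ≍ τ⁻¹ G(τ) > 0 as τ → ∞; (c) H(τ) → ∞ as τ → ∞; (d) τ^{-δ} H(τ) → 0 as τ → ∞ for every δ > 0. Then for any a > 0 and b > 0, H(aτ^b) ≍ H(τ) as τ → ∞. -/
/-! The hypotheses on `G` give `2τ H'(τ²) ≤ c H'(τ)` for large `τ`, so `c H(τ) - H(τ²)` is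
eventually nondecreasing; as `H → ∞` this yields the doubling bound `H(τ²) ≤ C H(τ)`, and by
iteration `H(τ^(2ⁿ)) ≤ Cⁿ H(τ)`. Since `H` is eventually increasing and
`τ^(2⁻ⁿ) ≤ a τ^b ≤ τ^(2ⁿ)` for `n` large, `H(a τ^b) ≍ H(τ)`. -/

/-- `Asymp f g` : `f(τ) ≍ g(τ)` as `τ → ∞`. -/
def Asymp (f g : ℝ → ℝ) : Prop :=
  ∃ C : ℝ, 0 < C ∧ ∃ M : ℝ, ∀ τ : ℝ, M ≤ τ → C⁻¹ * g τ ≤ f τ ∧ f τ ≤ C * g τ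

open Set Filter

lemma monotoneOn_Ici_of_hasDerivAt_nonneg {f f' : ℝ → ℝ} {M : ℝ}
    (hf : ∀ x, M ≤ x → HasDerivAt f (f' x) x) (hf' : ∀ x, M ≤ x → 0 ≤ f' x) :
    MonotoneOn f (Ici M) :=
  monotoneOn_of_hasDerivWithinAt_nonneg (convex_Ici M)
    (fun x hx => (hf x hx).continuousAt.continuousWithinAt)
    (fun x hx => (hf x (interior_subset hx)).hasDerivWithinAt)
    (fun x hx => hf' x (interior_subset hx))

lemma exists_two_mul_deriv_sq_le {G H' : ℝ → ℝ} (hH' : Asymp H' (fun τ => τ⁻¹ * G τ))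
    (hG : Asymp (fun τ => G (τ ^ 2)) G) :
    ∃ c, 0 ≤ c ∧ ∃ M, ∀ x, M ≤ x → 2 * x * H' (x ^ 2) ≤ c * H' x := by
  obtain ⟨C₁, hC₁, M₁, hM₁⟩ := hH'
  obtain ⟨C₂, hC₂, M₂, hM₂⟩ := hG
  dsimp only at hM₁ hM₂
  refine ⟨2 * C₁ ^ 2 * C₂, by positivity, max 1 (max M₁ M₂), fun x hx => ?_⟩
  simp only [max_le_iff] at hx
  obtain ⟨hx1, hxM₁, hxM₂⟩ := hx
  have hx0 : 0 < x := one_pos.trans_le hx1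
  have hH'_upper := (hM₁ (x ^ 2) (hxM₁.trans (le_self_pow₀ hx1 two_ne_zero))).2
  have hG_sq := (hM₂ x hxM₂).2
  have hH'_lower := (inv_mul_le_iff₀ hC₁).1 (hM₁ x hxM₁).1
  calc 2 * x * H' (x ^ 2) ≤ 2 * x * (C₁ * ((x ^ 2)⁻¹ * (C₂ * G x))) := by
        gcongr
        exact hH'_upper.trans (by gcongr)
    _ = 2 * C₁ * C₂ * (x⁻¹ * G x) := by field_simp
    _ ≤ 2 * C₁ * C₂ * (C₁ * H' x) := by gcongr
    _ = 2 * C₁ ^ 2 * C₂ * H' x := by ring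

section Doubling

variable {H : ℝ → ℝ} {M C : ℝ}

/-- Monotonicity of `u ↦ c H(u) - H(u²)` on `[M, ∞)`. -/
lemma sq_le_mul_add_of_hasDerivAt {H' : ℝ → ℝ} {c : ℝ} (hM : 1 ≤ M)
    (hH : ∀ x, M ≤ x → HasDerivAt H (H' x) x)
    (hH' : ∀ x, M ≤ x → 2 * x * H' (x ^ 2) ≤ c * H' x) {τ : ℝ} (hτ : M ≤ τ) :
    H (τ ^ 2) ≤ c * H τ + (H (M ^ 2) - c * H M) := by
  have hsq : ∀ x, M ≤ x → M ≤ x ^ 2 := fun x hx =>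
    hx.trans (le_self_pow₀ (hM.trans hx) two_ne_zero)
  have hφ : ∀ x, M ≤ x →
      HasDerivAt (fun u => c * H u - H (u ^ 2)) (c * H' x - H' (x ^ 2) * (2 * x)) x := by
    intro x hx
    have hpow : HasDerivAt (fun u : ℝ => u ^ 2) (2 * x) x := by
      simpa using hasDerivAt_pow 2 x
    have hcomp : HasDerivAt (fun u => H (u ^ 2)) (H' (x ^ 2) * (2 * x)) x :=
      (hH _ (hsq x hx)).comp (h := fun u => u ^ 2) x hpow
    exact ((hH x hx).const_mul c).sub hcomp
  have hmono := monotoneOn_Ici_of_hasDerivAt_nonneg hφ fun x hx => by linarith [hH' x hx]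
  have hφ_le := hmono self_mem_Ici hτ hτ
  dsimp only at hφ_le
  linarith

lemma exists_sq_le_mul_of_hasDerivAt {H' : ℝ → ℝ} {c : ℝ} (hM : 1 ≤ M)
    (hH : ∀ x, M ≤ x → HasDerivAt H (H' x) x)
    (hH' : ∀ x, M ≤ x → 2 * x * H' (x ^ 2) ≤ c * H' x) (htop : Tendsto H atTop atTop) :
    ∃ M', M ≤ M' ∧ ∀ τ, M' ≤ τ → H (τ ^ 2) ≤ (c + 1) * H τ := by
  obtain ⟨N, hN⟩ := eventually_atTop.1 (htop.eventually_ge_atTop (H (M ^ 2) - c * H M))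
  refine ⟨max M N, le_max_left _ _, fun τ hτ => ?_⟩
  have := sq_le_mul_add_of_hasDerivAt hM hH hH' ((le_max_left _ _).trans hτ)
  linarith [hN τ ((le_max_right _ _).trans hτ)]

lemma pow_two_pow_le_of_sq_le (hM : 1 ≤ M) (hC : 0 ≤ C)
    (hsq : ∀ τ, M ≤ τ → H (τ ^ 2) ≤ C * H τ) (n : ℕ) {τ : ℝ} (hτ : M ≤ τ) :
    H (τ ^ 2 ^ n) ≤ C ^ n * H τ := by
  induction n with
  | zero => simp
  | succ n ih =>
    have hτn : M ≤ τ ^ 2 ^ n := hτ.trans (le_self_pow₀ (hM.trans hτ) (by positivity))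
    calc H (τ ^ 2 ^ (n + 1)) = H ((τ ^ 2 ^ n) ^ 2) := by rw [pow_succ, pow_mul]
      _ ≤ C * H (τ ^ 2 ^ n) := hsq _ hτn
      _ ≤ C * (C ^ n * H τ) := by gcongr
      _ = C ^ (n + 1) * H τ := by ring

variable (hM : 1 ≤ M) (hC : 0 < C) (hmono : MonotoneOn H (Ici M))
  (hsq : ∀ τ, M ≤ τ → H (τ ^ 2) ≤ C * H τ) {a b : ℝ} (ha : 0 < a) (hb : 0 < b)
include hM hC hmono hsq ha hb

lemma eventually_comp_mul_rpow_le {n : ℕ} (hn : b + 1 ≤ 2 ^ n) :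
    ∀ᶠ τ in atTop, H (a * τ ^ b) ≤ C ^ n * H τ := by
  filter_upwards [eventually_ge_atTop M, eventually_ge_atTop a, eventually_ge_atTop 1,
    ((tendsto_rpow_atTop hb).const_mul_atTop ha).eventually_ge_atTop M]
    with τ hτM hτa hτ1 haτ
  have hτ0 : 0 ≤ τ := zero_le_one.trans hτ1
  have hle : a * τ ^ b ≤ τ ^ 2 ^ n :=
    calc a * τ ^ b ≤ τ * τ ^ b := by gcongr
      _ = τ ^ (b + 1) := by rw [Real.rpow_add_one (by positivity)]; ring
      _ ≤ τ ^ ((2 ^ n : ℕ) : ℝ) :=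
        Real.rpow_le_rpow_of_exponent_le hτ1 (by exact_mod_cast hn)
      _ = τ ^ 2 ^ n := Real.rpow_natCast τ _
  calc H (a * τ ^ b) ≤ H (τ ^ 2 ^ n) := hmono haτ (haτ.trans hle) hle
    _ ≤ C ^ n * H τ := pow_two_pow_le_of_sq_le hM hC.le hsq n hτM

lemma eventually_le_comp_mul_rpow {n : ℕ} (hn : ((2 : ℝ) ^ n)⁻¹ < b) :
    ∀ᶠ τ in atTop, H τ ≤ C ^ n * H (a * τ ^ b) := by
  set ε := ((2 : ℝ) ^ n)⁻¹
  filter_upwards [eventually_ge_atTop 0,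
    (tendsto_rpow_atTop (by positivity : 0 < ε)).eventually_ge_atTop M,
    ((tendsto_rpow_atTop (sub_pos.2 hn)).const_mul_atTop ha).eventually_ge_atTop 1]
    with τ hτ0 hτε hτbε
  have hle : τ ^ ε ≤ a * τ ^ b :=
    calc τ ^ ε ≤ a * τ ^ (b - ε) * τ ^ ε := le_mul_of_one_le_left (by positivity) hτbε
      _ = a * τ ^ b := by rw [mul_assoc, ← Real.rpow_add' hτ0 (by linarith), sub_add_cancel]
  have hroot : (τ ^ ε) ^ 2 ^ n = τ := by
    rw [← Real.rpow_mul_natCast hτ0]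
    simp [ε]
  calc H τ = H ((τ ^ ε) ^ 2 ^ n) := by rw [hroot]
    _ ≤ C ^ n * H (τ ^ ε) := pow_two_pow_le_of_sq_le hM hC.le hsq n hτε
    _ ≤ C ^ n * H (a * τ ^ b) := by gcongr; exact hmono hτε (hτε.trans hle) hle

theorem asymp_comp_mul_rpow_of_sq_le : Asymp (fun τ => H (a * τ ^ b)) H := by
  obtain ⟨n, hn⟩ := pow_unbounded_of_one_lt (max (b + 1) b⁻¹) one_lt_two
  obtain ⟨hn₁, hn₂⟩ := max_lt_iff.1 hn
  have hlower := eventually_le_comp_mul_rpow hM hC hmono hsq ha hb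
    ((inv_lt_comm₀ (by positivity) hb).2 hn₂)
  have hupper := eventually_comp_mul_rpow_le hM hC hmono hsq ha hb hn₁.le
  refine ⟨C ^ n, by positivity, eventually_atTop.1 ?_⟩
  filter_upwards [hlower, hupper] with τ hτ₁ hτ₂
  exact ⟨(inv_mul_le_iff₀ (by positivity)).2 hτ₁, hτ₂⟩

end Doubling

theorem stmt_8_general (R : ℝ)
    (G H H' : ℝ → ℝ)
    (hHderiv : ∀ τ ∈ Set.Ici R, HasDerivAt H (H' τ) τ)
    (ha : ∀ a : ℝ, 1 ≤ a → ∀ b : ℝ, 0 < b → Asymp (fun τ => G (a * τ ^ b)) G)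
    (hb : Asymp H' (fun τ => τ⁻¹ * G τ))
    (hb' : ∃ M : ℝ, ∀ τ : ℝ, M ≤ τ → 0 < H' τ)
    (hc : Filter.Tendsto H Filter.atTop Filter.atTop) :
    ∀ a : ℝ, 0 < a → ∀ b : ℝ, 0 < b → Asymp (fun τ => H (a * τ ^ b)) H := by
  intro a ha₀ b hb₀
  obtain ⟨c, hc₀, M₁, hM₁⟩ := exists_two_mul_deriv_sq_le hb
    (by simpa only [one_mul, Real.rpow_two] using ha 1 le_rfl 2 two_pos)
  obtain ⟨M₂, hM₂⟩ := hb'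
  set M := max (max 1 R) (max M₁ M₂)
  have hM : 1 ≤ M := le_max_of_le_left (le_max_left _ _)
  have hderiv : ∀ x, M ≤ x → HasDerivAt H (H' x) x := fun x hx =>
    hHderiv x ((le_max_right _ _).trans ((le_max_left _ _).trans hx))
  have hmono : MonotoneOn H (Ici M) := monotoneOn_Ici_of_hasDerivAt_nonneg hderiv fun x hx =>
    (hM₂ x ((le_max_right _ _).trans ((le_max_right _ _).trans hx))).le
  obtain ⟨M', hMM', hsq⟩ := exists_sq_le_mul_of_hasDerivAt hM hderiv
    (fun x hx => hM₁ x ((le_max_left _ _).trans ((le_max_right _ _).trans hx))) hc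
  exact asymp_comp_mul_rpow_of_sq_le (hM.trans hMM') (by linarith)
    (hmono.mono (Ici_subset_Ici.2 hMM')) hsq ha₀ hb₀

theorem stmt_8 (R α : ℝ) (hR : 0 < R) (hα : 0 < α)
    (G H H' : ℝ → ℝ)
    (hGpos : ∀ τ ∈ Set.Ici R, 0 < G τ) (hHpos : ∀ τ ∈ Set.Ici R, 0 < H τ)
    (hGcont : ContinuousOn G (Set.Ici R))
    (hHderiv : ∀ τ ∈ Set.Ici R, HasDerivAt H (H' τ) τ)
    (hH'cont : ContinuousOn H' (Set.Ici R))
    (ha : ∀ a : ℝ, 1 ≤ a → ∀ b : ℝ, 0 < b → Asymp (fun τ => G (a * τ ^ b)) G)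
    (hb : Asymp H' (fun τ => τ⁻¹ * G τ))
    (hb' : ∃ M : ℝ, ∀ τ : ℝ, M ≤ τ → 0 < H' τ)
    (hc : Filter.Tendsto H Filter.atTop Filter.atTop)
    (hd : ∀ δ : ℝ, 0 < δ →
      Filter.Tendsto (fun τ : ℝ => τ ^ (-δ) * H τ) Filter.atTop (nhds 0)) :
    ∀ a : ℝ, 0 < a → ∀ b : ℝ, 0 < b → Asymp (fun τ => H (a * τ ^ b)) H :=
  stmt_8_general R G H H' hHderiv ha hb hb' hc
end

section
/- Fix R > 0 and α > 0. Let G, H be positive functions on [R, ∞) satisfying the hypotheses: for every a ≥ 1 and b > 0, G(aτ^b) ≍ G(τ) as τ → ∞; H'(τ) ≍ τ⁻¹G(τ) > 0 as τ → ∞; H(τ) → ∞; and τ^{-δ}H(τ) → 0 for every δ > 0. Then for any b > 0 and c ∈ ℝ, H(τ^b H(τ)^c) ≍ H(τ) as τ → ∞. -/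
open Real Filter Set

section Asymp

variable {f g h : ℝ → ℝ}

theorem asymp_iff_eventually :
    Asymp f g ↔ ∃ C, 0 < C ∧ ∀ᶠ τ in atTop, C⁻¹ * g τ ≤ f τ ∧ f τ ≤ C * g τ := by
  simp only [Asymp, eventually_atTop]

theorem Filter.EventuallyEq.asymp (hfg : f =ᶠ[atTop] g) : Asymp f g :=
  asymp_iff_eventually.2 ⟨1, one_pos, hfg.mono fun τ hτ => by simp [hτ]⟩

theorem Asymp.of_bounds {c₁ c₂ : ℝ} (hc₁ : 0 < c₁)
    (hf : ∀ᶠ τ in atTop, c₁ * g τ ≤ f τ ∧ f τ ≤ c₂ * g τ) (hg : ∀ᶠ τ in atTop, 0 ≤ g τ) :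
    Asymp f g := by
  refine asymp_iff_eventually.2 ⟨max c₁⁻¹ c₂, lt_max_of_lt_left (inv_pos.2 hc₁), ?_⟩
  have hC : (max c₁⁻¹ c₂)⁻¹ ≤ c₁ :=
    inv_le_of_inv_le₀ hc₁ (le_max_left _ _)
  filter_upwards [hf, hg] with τ ⟨hlow, hup⟩ hgτ
  exact ⟨(mul_le_mul_of_nonneg_right hC hgτ).trans hlow,
    hup.trans (mul_le_mul_of_nonneg_right (le_max_right _ _) hgτ)⟩

theorem Asymp.symm (hfg : Asymp f g) : Asymp g f := by
  obtain ⟨C, hC, hfg⟩ := asymp_iff_eventually.1 hfg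
  refine asymp_iff_eventually.2 ⟨C, hC, hfg.mono fun τ ⟨hlow, hup⟩ => ⟨?_, ?_⟩⟩
  · rwa [inv_mul_le_iff₀ hC]
  · rwa [inv_mul_le_iff₀ hC] at hlow

theorem Asymp.trans (hfg : Asymp f g) (hgh : Asymp g h) : Asymp f h := by
  obtain ⟨C, hC, hfg⟩ := asymp_iff_eventually.1 hfg
  obtain ⟨D, hD, hgh⟩ := asymp_iff_eventually.1 hgh
  refine asymp_iff_eventually.2 ⟨C * D, mul_pos hC hD, ?_⟩
  filter_upwards [hfg, hgh] with τ ⟨hfg₁, hfg₂⟩ ⟨hgh₁, hgh₂⟩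
  constructor
  · calc (C * D)⁻¹ * h τ = C⁻¹ * (D⁻¹ * h τ) := by rw [mul_inv]; ring
      _ ≤ C⁻¹ * g τ := mul_le_mul_of_nonneg_left hgh₁ (inv_pos.2 hC).le
      _ ≤ f τ := hfg₁
  · calc f τ ≤ C * g τ := hfg₂
      _ ≤ C * (D * h τ) := mul_le_mul_of_nonneg_left hgh₂ hC.le
      _ = C * D * h τ := by ring

theorem Asymp.mul_left (hfg : Asymp f g) {k : ℝ → ℝ} (hk : ∀ᶠ τ in atTop, 0 ≤ k τ) :
    Asymp (fun τ => k τ * f τ) (fun τ => k τ * g τ) := by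
  obtain ⟨C, hC, hfg⟩ := asymp_iff_eventually.1 hfg
  refine asymp_iff_eventually.2 ⟨C, hC, ?_⟩
  filter_upwards [hfg, hk] with τ ⟨hlow, hup⟩ hkτ
  constructor
  · calc C⁻¹ * (k τ * g τ) = k τ * (C⁻¹ * g τ) := by ring
      _ ≤ k τ * f τ := mul_le_mul_of_nonneg_left hlow hkτ
  · calc k τ * f τ ≤ k τ * (C * g τ) := mul_le_mul_of_nonneg_left hup hkτ
      _ = C * (k τ * g τ) := by ring

theorem Asymp.comp_tendsto (hfg : Asymp f g) {φ : ℝ → ℝ} (hφ : Tendsto φ atTop atTop) :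
    Asymp (fun τ => f (φ τ)) (fun τ => g (φ τ)) := by
  obtain ⟨C, hC, hfg⟩ := asymp_iff_eventually.1 hfg
  exact asymp_iff_eventually.2 ⟨C, hC, hφ.eventually hfg⟩

theorem Asymp.const_mul {s : ℝ} (hs : 0 < s) (hg : ∀ᶠ τ in atTop, 0 ≤ g τ) :
    Asymp (fun τ => s * g τ) g :=
  .of_bounds hs (.of_forall fun _ => ⟨le_rfl, le_rfl⟩) hg

theorem Asymp.of_le_of_le {f₁ f₂ : ℝ → ℝ} (h₁ : Asymp f₁ g) (h₂ : Asymp f₂ g)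
    (hf : ∀ᶠ τ in atTop, f₁ τ ≤ f τ ∧ f τ ≤ f₂ τ) (hg : ∀ᶠ τ in atTop, 0 ≤ g τ) :
    Asymp f g := by
  obtain ⟨C₁, hC₁, h₁⟩ := asymp_iff_eventually.1 h₁
  obtain ⟨C₂, -, h₂⟩ := asymp_iff_eventually.1 h₂
  refine .of_bounds (inv_pos.2 hC₁) (c₂ := C₂) ?_ hg
  filter_upwards [h₁, h₂, hf] with τ h₁ h₂ hf
  exact ⟨h₁.1.trans hf.1, hf.2.trans h₂.2⟩

end Asymp

theorem monotoneOn_Ici_of_hasDerivAt_nonneg_s9 {F F' : ℝ → ℝ} {a : ℝ}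
    (hF : ∀ x ∈ Ici a, HasDerivAt F (F' x) x) (hF' : ∀ x ∈ Ici a, 0 ≤ F' x) :
    MonotoneOn F (Ici a) :=
  monotoneOn_of_hasDerivWithinAt_nonneg (convex_Ici a)
    (fun x hx => (hF x hx).continuousAt.continuousWithinAt)
    (fun x hx => (hF x (interior_subset hx)).hasDerivWithinAt)
    (fun x hx => hF' x (interior_subset hx))

theorem Asymp.of_hasDerivAt {F K F' K' : ℝ → ℝ}
    (hF : ∀ᶠ τ in atTop, HasDerivAt F (F' τ) τ) (hK : ∀ᶠ τ in atTop, HasDerivAt K (K' τ) τ)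
    (hFK : Asymp F' K') (hK_top : Tendsto K atTop atTop) : Asymp F K := by
  obtain ⟨C, hC, hFK⟩ := asymp_iff_eventually.1 hFK
  obtain ⟨M, hM⟩ := eventually_atTop.1 (hF.and (hK.and hFK))
  have hup : MonotoneOn (fun τ => C * K τ - F τ) (Ici M) :=
    monotoneOn_Ici_of_hasDerivAt_nonneg_s9
      (fun τ hτ => ((hM τ hτ).2.1.const_mul C).sub (hM τ hτ).1)
      (fun τ hτ => sub_nonneg.2 (hM τ hτ).2.2.2)
  have hlow : MonotoneOn (fun τ => F τ - C⁻¹ * K τ) (Ici M) :=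
    monotoneOn_Ici_of_hasDerivAt_nonneg_s9
      (fun τ hτ => (hM τ hτ).1.sub ((hM τ hτ).2.1.const_mul C⁻¹))
      (fun τ hτ => sub_nonneg.2 (hM τ hτ).2.2.1)
  -- the constants of integration are eventually dominated by `K`
  refine .of_bounds (half_pos (inv_pos.2 hC)) (c₂ := C + 1) ?_ (hK_top.eventually_ge_atTop 0)
  filter_upwards [eventually_ge_atTop M, hK_top.eventually_ge_atTop (F M - C * K M),
    (hK_top.const_mul_atTop (half_pos (inv_pos.2 hC))).eventually_ge_atTop (C⁻¹ * K M - F M)]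
    with τ hτ hK₁ hK₂
  have h₁ := hup self_mem_Ici hτ hτ
  have h₂ := hlow self_mem_Ici hτ hτ
  simp only at h₁ h₂ hK₂
  constructor <;> linarith

section GrowthConditions

variable {G H H' : ℝ → ℝ}

theorem asymp_comp_rpow {s : ℝ} (hs : 0 < s) (hH : ∀ᶠ τ in atTop, HasDerivAt H (H' τ) τ)
    (hH' : Asymp H' fun τ => τ⁻¹ * G τ) (hG : Asymp (fun τ => G (τ ^ s)) G)
    (hH_top : Tendsto H atTop atTop) : Asymp (fun τ => H (τ ^ s)) H := by
  have hpow : Tendsto (fun τ : ℝ => τ ^ s) atTop atTop := tendsto_rpow_atTop hs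
  have hchain : ∀ᶠ τ in atTop,
      HasDerivAt (fun τ => H (τ ^ s)) (s * τ ^ (s - 1) * H' (τ ^ s)) τ := by
    filter_upwards [hpow.eventually hH, eventually_gt_atTop 0] with τ hHτ hτ
    exact (hHτ.comp τ (hasDerivAt_rpow_const (Or.inl hτ.ne'))).congr_deriv (mul_comm _ _)
  have hderiv : Asymp (fun τ => s * τ ^ (s - 1) * H' (τ ^ s)) (fun τ => s * H' τ) := by
    have hrpow : (fun τ => s * τ ^ (s - 1) * ((τ ^ s)⁻¹ * G (τ ^ s)))
        =ᶠ[atTop] fun τ => s * τ⁻¹ * G (τ ^ s) := by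
      filter_upwards [eventually_gt_atTop 0] with τ hτ
      rw [rpow_sub_one hτ.ne']
      field_simp
    have hnonneg : ∀ᶠ τ : ℝ in atTop, 0 ≤ τ := eventually_ge_atTop 0
    refine ((hH'.comp_tendsto hpow).mul_left
      (hnonneg.mono fun τ hτ => by positivity)).trans (hrpow.asymp.trans ?_)
    refine (hG.mul_left (hnonneg.mono fun τ hτ => by positivity)).trans ?_
    simpa only [mul_assoc] using hH'.symm.mul_left (k := fun _ => s) (.of_forall fun _ => hs.le)
  exact (Asymp.of_hasDerivAt hchain (hH.mono fun τ hτ => hτ.const_mul s) hderiv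
    (hH_top.const_mul_atTop hs)).trans (.const_mul hs (hH_top.eventually_ge_atTop 0))

theorem eventually_le_rpow_of_tendsto_rpow_neg_mul {δ : ℝ}
    (hH : Tendsto (fun τ : ℝ => τ ^ (-δ) * H τ) atTop (nhds 0)) :
    ∀ᶠ τ in atTop, H τ ≤ τ ^ δ := by
  filter_upwards [hH.eventually (gt_mem_nhds one_pos), eventually_gt_atTop 0] with τ hlt hτ
  rw [rpow_neg hτ.le, inv_mul_lt_iff₀ (rpow_pos_of_pos hτ δ), mul_one] at hlt
  exact hlt.le

theorem eventually_rpow_le_rpow (hH_top : Tendsto H atTop atTop)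
    (hH : ∀ δ : ℝ, 0 < δ → Tendsto (fun τ : ℝ => τ ^ (-δ) * H τ) atTop (nhds 0))
    (c : ℝ) {ε : ℝ} (hε : 0 < ε) : ∀ᶠ τ in atTop, H τ ^ c ≤ τ ^ ε := by
  set δ := ε / (|c| + 1)
  have hδ : δ * |c| ≤ ε := by
    rw [div_mul_eq_mul_div, div_le_iff₀ (by positivity)]
    nlinarith [abs_nonneg c]
  filter_upwards [eventually_le_rpow_of_tendsto_rpow_neg_mul (hH δ (by positivity)),
    hH_top.eventually_ge_atTop 1, eventually_ge_atTop 1] with τ hHτ hH₁ hτ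
  calc H τ ^ c ≤ H τ ^ |c| := rpow_le_rpow_of_exponent_le hH₁ (le_abs_self c)
    _ ≤ (τ ^ δ) ^ |c| := rpow_le_rpow (by linarith) hHτ (abs_nonneg c)
    _ = τ ^ (δ * |c|) := by rw [← rpow_mul (by linarith)]
    _ ≤ τ ^ ε := rpow_le_rpow_of_exponent_le hτ hδ

theorem eventually_rpow_half_le_and_le_rpow_two_mul (hH_top : Tendsto H atTop atTop)
    (hH : ∀ δ : ℝ, 0 < δ → Tendsto (fun τ : ℝ => τ ^ (-δ) * H τ) atTop (nhds 0))
    {b : ℝ} (hb : 0 < b) (c : ℝ) :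
    ∀ᶠ τ in atTop, τ ^ (b / 2) ≤ τ ^ b * H τ ^ c ∧ τ ^ b * H τ ^ c ≤ τ ^ (2 * b) := by
  filter_upwards [eventually_rpow_le_rpow hH_top hH (-c) (half_pos hb),
    eventually_rpow_le_rpow hH_top hH c hb, hH_top.eventually_gt_atTop 0,
    eventually_gt_atTop 0] with τ hneg hpos hHτ hτ
  have hτb : 0 ≤ τ ^ b := (rpow_pos_of_pos hτ b).le
  constructor
  · calc τ ^ (b / 2) = τ ^ b * (τ ^ (b / 2))⁻¹ := by
          rw [← rpow_neg hτ.le, ← rpow_add hτ]; ring_nf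
      _ ≤ τ ^ b * H τ ^ c := by
          refine mul_le_mul_of_nonneg_left ?_ hτb
          rw [rpow_neg hHτ.le] at hneg
          exact inv_le_of_inv_le₀ (rpow_pos_of_pos hHτ c) hneg
  · calc τ ^ b * H τ ^ c ≤ τ ^ b * τ ^ b := mul_le_mul_of_nonneg_left hpos hτb
      _ = τ ^ (2 * b) := by rw [← rpow_add hτ]; ring_nf

end GrowthConditions

theorem stmt_9_general (R : ℝ)
    (G H H' : ℝ → ℝ)
    (hHderiv : ∀ τ ∈ Set.Ici R, HasDerivAt H (H' τ) τ)
    (ha : ∀ a : ℝ, 1 ≤ a → ∀ b : ℝ, 0 < b → Asymp (fun τ => G (a * τ ^ b)) G)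
    (hb : Asymp H' (fun τ => τ⁻¹ * G τ))
    (hb' : ∃ M : ℝ, ∀ τ : ℝ, M ≤ τ → 0 < H' τ)
    (hc : Filter.Tendsto H Filter.atTop Filter.atTop)
    (hd : ∀ δ : ℝ, 0 < δ →
      Filter.Tendsto (fun τ : ℝ => τ ^ (-δ) * H τ) Filter.atTop (nhds 0)) :
    ∀ b : ℝ, 0 < b → ∀ c : ℝ, Asymp (fun τ => H (τ ^ b * H τ ^ c)) H := by
  intro b hb₀ c
  have hH : ∀ᶠ τ in atTop, HasDerivAt H (H' τ) τ := (eventually_ge_atTop R).mono hHderiv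
  have hHs : ∀ s : ℝ, 0 < s → Asymp (fun τ => H (τ ^ s)) H := fun s hs =>
    asymp_comp_rpow hs hH hb (by simpa using ha 1 le_rfl s hs) hc
  obtain ⟨M, hM⟩ := hb'
  have hmono : MonotoneOn H (Ici (max M R)) :=
    monotoneOn_Ici_of_hasDerivAt_nonneg_s9 (fun τ (hτ : max M R ≤ τ) => hHderiv τ (max_le_iff.1 hτ).2)
      (fun τ (hτ : max M R ≤ τ) => (hM τ (max_le_iff.1 hτ).1).le)
  refine (hHs (b / 2) (half_pos hb₀)).of_le_of_le (hHs (2 * b) (by positivity)) ?_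
    (hc.eventually_ge_atTop 0)
  filter_upwards [eventually_rpow_half_le_and_le_rpow_two_mul hc hd hb₀ c,
    (tendsto_rpow_atTop (half_pos hb₀)).eventually_ge_atTop (max M R)] with τ ⟨h₁, h₂⟩ hτ
  exact ⟨hmono hτ (hτ.trans h₁) h₁, hmono (hτ.trans h₁) (hτ.trans (h₁.trans h₂)) h₂⟩

theorem stmt_9 (R α : ℝ) (hR : 0 < R) (hα : 0 < α)
    (G H H' : ℝ → ℝ)
    (hGpos : ∀ τ ∈ Set.Ici R, 0 < G τ) (hHpos : ∀ τ ∈ Set.Ici R, 0 < H τ)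
    (hGcont : ContinuousOn G (Set.Ici R))
    (hHderiv : ∀ τ ∈ Set.Ici R, HasDerivAt H (H' τ) τ)
    (hH'cont : ContinuousOn H' (Set.Ici R))
    (ha : ∀ a : ℝ, 1 ≤ a → ∀ b : ℝ, 0 < b → Asymp (fun τ => G (a * τ ^ b)) G)
    (hb : Asymp H' (fun τ => τ⁻¹ * G τ))
    (hb' : ∃ M : ℝ, ∀ τ : ℝ, M ≤ τ → 0 < H' τ)
    (hc : Filter.Tendsto H Filter.atTop Filter.atTop)
    (hd : ∀ δ : ℝ, 0 < δ →
      Filter.Tendsto (fun τ : ℝ => τ ^ (-δ) * H τ) Filter.atTop (nhds 0)) :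
    ∀ b : ℝ, 0 < b → ∀ c : ℝ, Asymp (fun τ => H (τ ^ b * H τ ^ c)) H :=
  stmt_9_general R G H H' hHderiv ha hb hb' hc hd
end

section
/- Let p > 1, δ ∈ (0,1), q ∈ ℝ, α ∈ (1, p), and let G be a positive continuous function on (R, ∞) (for some R ≥ 2) such that τ ↦ τ^{-δ} G(τ) is decreasing on (R, ∞). Then there exist C > 0 and T ∈ (0,1) such that for all t ∈ (0, T): ∫_0^t s^{-(p-α)/(p-1)} G(s⁻¹)^{(α-1)/(p-1)} ds ≤ C t^{(α-1)/(p-1)} G(t⁻¹)^{(α-1)/(p-1)}. -/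
/-!
Since `τ ^ (-δ) * G τ` decreases, `G (s⁻¹) ≤ (t / s) ^ δ * G (t⁻¹)` for `0 < s ≤ t`. Hence on `(0, t]`
the integrand is dominated by `t ^ (δ γ) G (t⁻¹) ^ γ · s ^ (γ - 1 - δ γ)` with `γ = (α - 1) / (p - 1)`,
a power with exponent `> -1` because `δ < 1`, and integrating it gives the bound with
`C = (γ (1 - δ))⁻¹`.
-/

open MeasureTheory Set Real

section

variable {G : ℝ → ℝ} {R δ : ℝ}

lemma rpow_mul_apply_inv_le_of_antitoneOn (hdec : AntitoneOn (fun τ => τ ^ (-δ) * G τ) (Ioi R))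
    {s t : ℝ} (hs : 0 < s) (hst : s ≤ t) (htR : R < t⁻¹) :
    s ^ δ * G s⁻¹ ≤ t ^ δ * G t⁻¹ := by
  have hinv : t⁻¹ ≤ s⁻¹ := inv_anti₀ hs hst
  have h := hdec (mem_Ioi.mpr htR) (mem_Ioi.mpr (htR.trans_le hinv)) hinv
  have inv_rpow_neg : ∀ x : ℝ, 0 < x → x⁻¹ ^ (-δ) = x ^ δ := fun x hx => by
    rw [inv_rpow hx.le, rpow_neg hx.le, inv_inv]
  simpa only [inv_rpow_neg s hs, inv_rpow_neg t (hs.trans_le hst)] using h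

lemma rpow_mul_apply_inv_rpow_le (hGnonneg : ∀ τ ∈ Ioi R, 0 ≤ G τ)
    (hdec : AntitoneOn (fun τ => τ ^ (-δ) * G τ) (Ioi R)) {a γ : ℝ} (hγ : 0 ≤ γ)
    {s t : ℝ} (hs : 0 < s) (hst : s ≤ t) (htR : R < t⁻¹) :
    s ^ a * G s⁻¹ ^ γ ≤ t ^ (δ * γ) * G t⁻¹ ^ γ * s ^ (a - δ * γ) := by
  have ht : 0 < t := hs.trans_le hst
  have hGs : 0 ≤ G s⁻¹ := hGnonneg _ (htR.trans_le (inv_anti₀ hs hst))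
  have hGt : 0 ≤ G t⁻¹ := hGnonneg _ htR
  have hpow : (s ^ δ * G s⁻¹) ^ γ ≤ (t ^ δ * G t⁻¹) ^ γ :=
    rpow_le_rpow (by positivity) (rpow_mul_apply_inv_le_of_antitoneOn hdec hs hst htR) hγ
  rw [mul_rpow (by positivity) hGs, mul_rpow (by positivity) hGt, ← rpow_mul hs.le,
    ← rpow_mul ht.le] at hpow
  calc s ^ a * G s⁻¹ ^ γ = s ^ (δ * γ) * G s⁻¹ ^ γ * s ^ (a - δ * γ) := by
        rw [mul_right_comm, ← rpow_add hs, add_sub_cancel]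
    _ ≤ t ^ (δ * γ) * G t⁻¹ ^ γ * s ^ (a - δ * γ) := by gcongr

theorem integral_rpow_mul_apply_inv_rpow_le (hGnonneg : ∀ τ ∈ Ioi R, 0 ≤ G τ)
    (hGcont : ContinuousOn G (Ioi R)) (hdec : AntitoneOn (fun τ => τ ^ (-δ) * G τ) (Ioi R))
    {a γ : ℝ} (hγ : 0 ≤ γ) (ha : δ * γ < a + 1) {t : ℝ} (ht : 0 < t) (htR : R < t⁻¹) :
    ∫ s in (0:ℝ)..t, s ^ a * G s⁻¹ ^ γ ≤ (a + 1 - δ * γ)⁻¹ * t ^ (a + 1) * G t⁻¹ ^ γ := by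
  set K := t ^ (δ * γ) * G t⁻¹ ^ γ with hK
  have hmem : ∀ s ∈ Ioc 0 t, R < s⁻¹ := fun s hs => htR.trans_le (inv_anti₀ hs.1 hs.2)
  have hbound : ∀ s ∈ Ioc 0 t, s ^ a * G s⁻¹ ^ γ ≤ K * s ^ (a - δ * γ) := fun s hs =>
    rpow_mul_apply_inv_rpow_le hGnonneg hdec hγ hs.1 hs.2 htR
  have hcont : ContinuousOn (fun s : ℝ => s ^ a * G s⁻¹ ^ γ) (Ioc 0 t) :=
    (continuousOn_id.rpow_const fun s hs => Or.inl hs.1.ne').mul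
      ((hGcont.comp (continuousOn_inv₀.mono fun s hs => hs.1.ne') hmem).rpow_const
        fun _ _ => Or.inr hγ)
  have hg : IntervalIntegrable (fun s => K * s ^ (a - δ * γ)) volume 0 t :=
    (intervalIntegral.intervalIntegrable_rpow' (by linarith)).const_mul K
  have hf : IntervalIntegrable (fun s : ℝ => s ^ a * G s⁻¹ ^ γ) volume 0 t := by
    refine hg.mono_fun' ?_ ?_ <;> rw [uIoc_of_le ht.le]
    · exact hcont.aestronglyMeasurable measurableSet_Ioc
    · refine (ae_restrict_iff' measurableSet_Ioc).mpr (Filter.Eventually.of_forall fun s hs => ?_)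
      have : 0 ≤ G s⁻¹ := hGnonneg _ (hmem s hs)
      change ‖s ^ a * G s⁻¹ ^ γ‖ ≤ K * s ^ (a - δ * γ)
      rw [norm_of_nonneg (mul_nonneg (rpow_nonneg hs.1.le _) (rpow_nonneg this _))]
      exact hbound s hs
  have hr : 0 < a - δ * γ + 1 := by linarith
  calc ∫ s in (0:ℝ)..t, s ^ a * G s⁻¹ ^ γ ≤ ∫ s in (0:ℝ)..t, K * s ^ (a - δ * γ) :=
        intervalIntegral.integral_mono_on_of_le_Ioo ht.le hf hg fun s hs =>
          hbound s (Ioo_subset_Ioc_self hs)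
    _ = K * (t ^ (a - δ * γ + 1) / (a - δ * γ + 1)) := by
        rw [intervalIntegral.integral_const_mul, integral_rpow (Or.inl (by linarith)),
          zero_rpow hr.ne', sub_zero]
    _ = (a + 1 - δ * γ)⁻¹ * t ^ (a + 1) * G t⁻¹ ^ γ := by
        rw [show a + 1 - δ * γ = a - δ * γ + 1 by ring,
          show a + 1 = δ * γ + (a - δ * γ + 1) by ring, rpow_add ht (δ * γ), hK]
        ring

end

theorem stmt_13_general (p δ α R : ℝ) (hp : 1 < p) (hδ1 : δ < 1)
    (hα1 : 1 < α)
    (G : ℝ → ℝ) (hGpos : ∀ τ ∈ Set.Ioi R, 0 < G τ)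
    (hGcont : ContinuousOn G (Set.Ioi R))
    (hdec : AntitoneOn (fun τ => τ ^ (-δ) * G τ) (Set.Ioi R)) :
    ∃ C : ℝ, 0 < C ∧ ∃ T : ℝ, 0 < T ∧ T < 1 ∧ ∀ t : ℝ, 0 < t → t < T →
      (∫ s in (0:ℝ)..t, s ^ (-((p-α)/(p-1))) * G s⁻¹ ^ ((α-1)/(p-1))) ≤
        C * t ^ ((α-1)/(p-1)) * G t⁻¹ ^ ((α-1)/(p-1)) := by
  set γ := (α - 1) / (p - 1)
  have hγ : 0 < γ := div_pos (by linarith) (by linarith)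
  have hexp : -((p - α) / (p - 1)) + 1 = γ := by
    simp only [γ]; field_simp [sub_ne_zero.mpr hp.ne']; ring
  have hC : -((p - α) / (p - 1)) + 1 - δ * γ = γ * (1 - δ) := by rw [hexp]; ring
  refine ⟨(γ * (1 - δ))⁻¹, inv_pos.mpr (mul_pos hγ (by linarith)), (|R| + 2)⁻¹, by positivity,
    inv_lt_one_of_one_lt₀ (by linarith [abs_nonneg R]), fun t ht htT => ?_⟩
  have htR : R < t⁻¹ :=
    calc R < |R| + 2 := by linarith [le_abs_self R]
      _ < t⁻¹ := (lt_inv_comm₀ (by positivity : (0:ℝ) < |R| + 2) ht).mpr htT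
  have h := integral_rpow_mul_apply_inv_rpow_le (fun τ hτ => (hGpos τ hτ).le) hGcont hdec hγ.le
    (a := -((p - α) / (p - 1))) (by rw [hexp]; nlinarith) ht htR
  rwa [hC, hexp] at h

theorem stmt_13 (p δ q α R : ℝ) (hp : 1 < p) (hδ : 0 < δ) (hδ1 : δ < 1)
    (hα1 : 1 < α) (hαp : α < p) (hR : 2 ≤ R)
    (G : ℝ → ℝ) (hGpos : ∀ τ ∈ Set.Ioi R, 0 < G τ)
    (hGcont : ContinuousOn G (Set.Ioi R))
    (hdec : AntitoneOn (fun τ => τ ^ (-δ) * G τ) (Set.Ioi R)) :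
    ∃ C : ℝ, 0 < C ∧ ∃ T : ℝ, 0 < T ∧ T < 1 ∧ ∀ t : ℝ, 0 < t → t < T →
      (∫ s in (0:ℝ)..t, s ^ (-((p-α)/(p-1))) * G s⁻¹ ^ ((α-1)/(p-1))) ≤
        C * t ^ ((α-1)/(p-1)) * G t⁻¹ ^ ((α-1)/(p-1)) :=
  stmt_13_general p δ α R hp hδ1 hα1 G hGpos hGcont hdec
end
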